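/- arXiv:1809.08475 — 4 statements merged into one kernel-verified Lean document; each statement's English description precedes it below -/
import Mathlib

section
/- For every r ≥ 2, the maps a₁, …, a_r are homeomorphisms of X = {0,1}^ℕ, and the action on X of the group G̃_r = ⟨a₁, …, a_r⟩ ≤ Homeo(X) is not locally quasi-analytic. -/
/-- The group of self-homeomorphisms of a topological space, with composition
`(f * g) x = f (g x)`. -/
instance homeoGroup {X : Type*} [TopologicalSpace X] : Group (X ≃ₜ X) where
  mul f g := g.trans f
  one := Homeomorph.refl X
  inv := Homeomorph.symm
  mul_assoc _ _ _ := Homeomorph.ext fun _ => rfl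
  one_mul _ := Homeomorph.ext fun _ => rfl
  mul_one _ := Homeomorph.ext fun _ => rfl
  inv_mul_cancel f := Homeomorph.ext f.symm_apply_apply

/-- The standard metric on the Cantor set `{0,1}^ℕ`, inducing the product topology. -/
noncomputable instance : MetricSpace (ℕ → Fin 2) := PiNat.metricSpace

/-- Prepend the letter `v` to the sequence `x`. -/
def cons (v : Fin 2) (x : ℕ → Fin 2) : ℕ → Fin 2
  | 0 => v
  | n + 1 => x n

/-- Pink's recursive equations for the generators `a₁, …, a_r` of the group `G̃_r`:
`a₁(0·w) = 1·w`, `a₁(1·w) = 0·a_r(w)`, and for `2 ≤ i ≤ r`,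
`a_i(0·w) = 0·a_{i-1}(w)`, `a_i(1·w) = 1·w`. -/
def PinkPeriodicRec (r : ℕ) (a : ℕ → (ℕ → Fin 2) → (ℕ → Fin 2)) : Prop :=
  (∀ w, a 1 (cons 0 w) = cons 1 w) ∧
  (∀ w, a 1 (cons 1 w) = cons 0 (a r w)) ∧
  ∀ i, 2 ≤ i → i ≤ r →
    (∀ w, a i (cons 0 w) = cons 0 (a (i - 1) w)) ∧ (∀ w, a i (cons 1 w) = cons 1 w)

/-- An action of a family `Γ` of self-maps of a metric space `X` is locally quasi-analytic
if there is `ε > 0` such that for every open set `U` of diameter less than `ε`,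
any two elements of `Γ` that agree on a nonempty open subset `V ⊆ U` agree on all of `U`. -/
def IsLocallyQuasiAnalytic {X : Type*} [MetricSpace X] (Γ : Set (X → X)) : Prop :=
  ∃ ε > (0 : ℝ), ∀ U : Set X, IsOpen U → Metric.diam U < ε →
    ∀ g₁ ∈ Γ, ∀ g₂ ∈ Γ, ∀ V : Set X, V ⊆ U → IsOpen V → V.Nonempty →
      Set.EqOn g₁ g₂ V → Set.EqOn g₁ g₂ U

/-! ### Auxiliary constructions for the proof -/

/-- Coordinate `n` of Pink's generator `a_i` applied to `x` (defined for all `i`,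
with the convention that `a_i = id` for `i ∉ {1, …}`). -/
def pv (r : ℕ) : ℕ → ℕ → (ℕ → Fin 2) → Fin 2
  | 0, i, x => if i = 1 then 1 - x 0 else x 0
  | n+1, i, x =>
    if i = 1 then (if x 0 = 0 then x (n+1) else pv r n r (fun k => x (k+1)))
    else if 2 ≤ i then (if x 0 = 0 then pv r n (i-1) (fun k => x (k+1)) else x (n+1))
    else x (n+1)

/-- Coordinate `n` of the inverse of Pink's generator `a_i` applied to `x`. -/
def pw (r : ℕ) : ℕ → ℕ → (ℕ → Fin 2) → Fin 2
  | 0, i, x => if i = 1 then 1 - x 0 else x 0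
  | n+1, i, x =>
    if i = 1 then (if x 0 = 1 then x (n+1) else pw r n r (fun k => x (k+1)))
    else if 2 ≤ i then (if x 0 = 0 then pw r n (i-1) (fun k => x (k+1)) else x (n+1))
    else x (n+1)

def pMap (r i : ℕ) (x : ℕ → Fin 2) : ℕ → Fin 2 := fun n => pv r n i x
def pMap' (r i : ℕ) (x : ℕ → Fin 2) : ℕ → Fin 2 := fun n => pw r n i x

lemma fin2cases (v : Fin 2) : v = 0 ∨ v = 1 := by fin_cases v <;> simp

lemma fin2sub (v : Fin 2) : 1 - (1 - v) = v := by fin_cases v <;> rfl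

lemma cons_head_tail (x : ℕ → Fin 2) : cons (x 0) (fun k => x (k+1)) = x :=
  funext fun n => by cases n <;> rfl

lemma pMap_rec (r : ℕ) : PinkPeriodicRec r (pMap r) := by
  refine ⟨fun w => funext fun n => ?_, fun w => funext fun n => ?_,
    fun i h2 hir => ⟨fun w => funext fun n => ?_, fun w => funext fun n => ?_⟩⟩
  · cases n <;> simp [pMap, pv, cons]
  · cases n <;> simp [pMap, pv, cons]
  · have h1 : i ≠ 1 := by omega
    cases n <;> simp [pMap, pv, cons, h1, h2]
  · have h1 : i ≠ 1 := by omega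
    cases n <;> simp [pMap, pv, cons, h1, h2]

lemma pMap_unique {r : ℕ} (hr : 1 ≤ r) {a : ℕ → (ℕ → Fin 2) → (ℕ → Fin 2)}
    (h : PinkPeriodicRec r a) : ∀ i, 1 ≤ i → i ≤ r → a i = pMap r i := by
  suffices H : ∀ n i, 1 ≤ i → i ≤ r → ∀ x, a i x n = pv r n i x by
    intro i h1 h2; funext x n; exact H n i h1 h2 x
  intro n
  induction n with
  | zero =>
    intro i h1 h2 x
    rw [← cons_head_tail x]
    rcases fin2cases (x 0) with h0 | h0 <;> rw [h0] <;>
      rcases eq_or_ne i 1 with rfl | hi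
    · rw [h.1]; simp [pv, cons]
    · rw [(h.2.2 i (by omega) h2).1]; simp [pv, cons, hi]
    · rw [h.2.1]; simp [pv, cons]
    · rw [(h.2.2 i (by omega) h2).2]; simp [pv, cons, hi]
  | succ n ih =>
    intro i h1 h2 x
    rw [← cons_head_tail x]
    rcases fin2cases (x 0) with h0 | h0 <;> rw [h0] <;>
      rcases eq_or_ne i 1 with rfl | hi
    · rw [h.1]; simp [pv, cons]
    · rw [(h.2.2 i (by omega) h2).1]
      have := ih (i-1) (by omega) (by omega) (fun k => x (k+1))
      simp [pv, cons, hi, (by omega : 2 ≤ i)]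
      exact this
    · rw [h.2.1]
      have := ih r hr le_rfl (fun k => x (k+1))
      simp [pv, cons]
      exact this
    · rw [(h.2.2 i (by omega) h2).2]; simp [pv, cons, hi]

lemma pw_pv (r : ℕ) : ∀ n i x, pw r n i (pMap r i x) = x n := by
  intro n
  induction n with
  | zero =>
    intro i x
    rcases eq_or_ne i 1 with rfl | hi
    · simp [pw, pMap, pv, fin2sub]
    · simp [pw, pMap, pv, hi]
  | succ n ih =>
    intro i x
    rcases eq_or_ne i 1 with rfl | hi
    · rcases fin2cases (x 0) with h0 | h0
      · have h00 : pMap r 1 x 0 = 1 := by simp [pMap, pv, h0]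
        simp [pw, h00, pMap, pv, h0]
      · have h00 : pMap r 1 x 0 = 0 := by simp [pMap, pv, h0]
        have htail : (fun k => pMap r 1 x (k+1)) = pMap r r (fun k => x (k+1)) := by
          funext m; simp [pMap, pv, h0]
        simp only [pw, h00]
        norm_num
        rw [htail]
        exact ih r (fun k => x (k+1))
    · rcases le_or_gt 2 i with h2 | h2
      · have h00 : pMap r i x 0 = x 0 := by simp [pMap, pv, hi]
        rcases fin2cases (x 0) with h0 | h0
        · have htail : (fun k => pMap r i x (k+1)) = pMap r (i-1) (fun k => x (k+1)) := by
            funext m; simp [pMap, pv, h0, hi, h2]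
          simp only [pw, h00, h0, if_neg hi, if_pos h2, if_pos rfl]
          rw [htail]
          exact ih (i-1) (fun k => x (k+1))
        · simp [pw, h00, h0, hi, h2, pMap, pv]
      · have h1 : i ≠ 1 := hi
        have h2' : ¬ 2 ≤ i := by omega
        simp [pw, pMap, pv, h1, h2']

lemma pv_pw (r : ℕ) : ∀ n i x, pv r n i (pMap' r i x) = x n := by
  intro n
  induction n with
  | zero =>
    intro i x
    rcases eq_or_ne i 1 with rfl | hi
    · simp [pw, pMap', pv, fin2sub]
    · simp [pw, pMap', pv, hi]
  | succ n ih =>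
    intro i x
    rcases eq_or_ne i 1 with rfl | hi
    · rcases fin2cases (x 0) with h0 | h0
      · have h00 : pMap' r 1 x 0 = 1 := by simp [pMap', pw, h0]
        have htail : (fun k => pMap' r 1 x (k+1)) = pMap' r r (fun k => x (k+1)) := by
          funext m; simp [pMap', pw, h0]
        have h01 : pMap' r 1 x 0 ≠ 0 := by rw [h00]; decide
        simp only [pv, if_pos rfl, if_neg h01]
        rw [htail]
        exact ih r (fun k => x (k+1))
      · have h00 : pMap' r 1 x 0 = 0 := by simp [pMap', pw, h0]
        simp [pv, h00, pMap', pw, h0]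
    · rcases le_or_gt 2 i with h2 | h2
      · have h00 : pMap' r i x 0 = x 0 := by simp [pMap', pw, hi]
        rcases fin2cases (x 0) with h0 | h0
        · have htail : (fun k => pMap' r i x (k+1)) = pMap' r (i-1) (fun k => x (k+1)) := by
            funext m; simp [pMap', pw, h0, hi, h2]
          simp only [pv, h00, h0, if_neg hi, if_pos h2, if_pos rfl]
          rw [htail]
          exact ih (i-1) (fun k => x (k+1))
        · simp [pv, h00, h0, hi, h2, pMap', pw]
      · have h2' : ¬ 2 ≤ i := by omega
        simp [pv, pMap', pw, hi, h2']

lemma pv_congr (r : ℕ) : ∀ n i (x y : ℕ → Fin 2), (∀ k, k ≤ n → x k = y k) →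
    pv r n i x = pv r n i y := by
  intro n
  induction n with
  | zero => intro i x y h; simp [pv, h 0 le_rfl]
  | succ n ih =>
    intro i x y h
    have h0 := h 0 (by omega)
    have ht : ∀ k, k ≤ n → x (k+1) = y (k+1) := fun k hk => h (k+1) (by omega)
    have hn := h (n+1) le_rfl
    simp only [pv, h0, hn]
    split_ifs <;> first
      | rfl
      | exact ih _ _ _ ht

lemma pw_congr (r : ℕ) : ∀ n i (x y : ℕ → Fin 2), (∀ k, k ≤ n → x k = y k) →
    pw r n i x = pw r n i y := by
  intro n
  induction n with
  | zero => intro i x y h; simp [pw, h 0 le_rfl]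
  | succ n ih =>
    intro i x y h
    have h0 := h 0 (by omega)
    have ht : ∀ k, k ≤ n → x (k+1) = y (k+1) := fun k hk => h (k+1) (by omega)
    have hn := h (n+1) le_rfl
    simp only [pw, h0, hn]
    split_ifs <;> first
      | rfl
      | exact ih _ _ _ ht

lemma pMap_cont (r i : ℕ) : Continuous (pMap r i) := by
  apply continuous_pi
  intro n
  apply IsLocallyConstant.continuous
  rw [IsLocallyConstant.iff_exists_open]
  intro x
  exact ⟨PiNat.cylinder x (n+1), PiNat.isOpen_cylinder (fun _ => Fin 2) x (n+1),
    PiNat.self_mem_cylinder _ _,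
    fun y hy => pv_congr r n i y x (fun k hk => hy k (by omega))⟩

lemma pMap'_cont (r i : ℕ) : Continuous (pMap' r i) := by
  apply continuous_pi
  intro n
  apply IsLocallyConstant.continuous
  rw [IsLocallyConstant.iff_exists_open]
  intro x
  exact ⟨PiNat.cylinder x (n+1), PiNat.isOpen_cylinder (fun _ => Fin 2) x (n+1),
    PiNat.self_mem_cylinder _ _,
    fun y hy => pw_congr r n i y x (fun k hk => hy k (by omega))⟩

noncomputable def pHomeo (r i : ℕ) : (ℕ → Fin 2) ≃ₜ (ℕ → Fin 2) where
  toFun := pMap r i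
  invFun := pMap' r i
  left_inv := fun x => funext fun n => pw_pv r n i x
  right_inv := fun x => funext fun n => pv_pw r n i x
  continuous_toFun := pMap_cont r i
  continuous_invFun := pMap'_cont r i

lemma pMap_isHomeomorph (r i : ℕ) : IsHomeomorph (pMap r i) := (pHomeo r i).isHomeomorph

/-- Prepend `m` zeros. -/
def zc : ℕ → (ℕ → Fin 2) → (ℕ → Fin 2)
  | 0, x => x
  | m+1, x => cons 0 (zc m x)

lemma zc_apply : ∀ m (x : ℕ → Fin 2) n, zc m x n = if n < m then 0 else x (n - m) := by
  intro m
  induction m with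
  | zero => intro x n; simp [zc]
  | succ m ih =>
    intro x n
    cases n with
    | zero => simp [zc, cons]
    | succ n => simp [zc, cons, ih x n, Nat.succ_lt_succ_iff, Nat.succ_sub_succ]

lemma zc_add : ∀ m n (x : ℕ → Fin 2), zc (m + n) x = zc m (zc n x) := by
  intro m
  induction m with
  | zero => intro n x; simp [zc]
  | succ m ih =>
    intro n x
    have : m + 1 + n = (m + n) + 1 := by omega
    rw [this]
    show cons 0 (zc (m+n) x) = cons 0 (zc m (zc n x))
    rw [ih]

lemma zc_zero_seq (m : ℕ) : zc m (fun _ => (0 : Fin 2)) = fun _ => (0 : Fin 2) := by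
  funext n; rw [zc_apply]; split <;> rfl

lemma aC1 {r : ℕ} {a : ℕ → (ℕ → Fin 2) → (ℕ → Fin 2)} (h : PinkPeriodicRec r a) :
    ∀ j i, j + 1 ≤ i → i ≤ r → ∀ w, a i (zc j w) = zc j (a (i - j) w) := by
  intro j
  induction j with
  | zero => intro i _ _ w; simp [zc]
  | succ j ih =>
    intro i hj hir w
    show a i (cons 0 (zc j w)) = cons 0 (zc j (a (i - (j+1)) w))
    rw [(h.2.2 i (by omega) hir).1]
    have e : i - 1 - j = i - (j+1) := by omega
    rw [ih (i-1) (by omega) (by omega), e]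

lemma aC3 {r : ℕ} {a : ℕ → (ℕ → Fin 2) → (ℕ → Fin 2)} (h : PinkPeriodicRec r a)
    (hr : 2 ≤ r) (w : ℕ → Fin 2) :
    a r (a r (zc r w)) = zc r (a r w) := by
  have hsplit : ∀ v : ℕ → Fin 2, zc r v = zc (r-1) (cons 0 v) := by
    intro v
    have : r = (r - 1) + 1 := by omega
    rw [this, zc_add]
    rfl
  rw [hsplit w, aC1 h (r-1) r (by omega) le_rfl]
  have h1 : r - (r - 1) = 1 := by omega
  rw [h1, h.1, aC1 h (r-1) r (by omega) le_rfl, h1, h.2.1]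
  rw [hsplit (a r w)]

lemma homeo_mul_apply (f g : (ℕ → Fin 2) ≃ₜ (ℕ → Fin 2)) (x : ℕ → Fin 2) :
    (f * g) x = f (g x) := rfl

lemma aC4 {r : ℕ} (hr : 2 ≤ r) (A : ℕ → (ℕ → Fin 2) ≃ₜ (ℕ → Fin 2))
    (h : PinkPeriodicRec r (fun i => ⇑(A i))) :
    ∀ k (w : ℕ → Fin 2), (A r ^ (2^k)) (zc (k*r) w) = zc (k*r) (A r w) := by
  intro k
  induction k with
  | zero => intro w; simp [zc, pow_one]
  | succ k ih =>
    intro w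
    have hm : (k+1) * r = k * r + r := by ring
    have hp : (2:ℕ)^(k+1) = 2^k + 2^k := by ring
    rw [hm, hp, pow_add, zc_add, homeo_mul_apply, ih, ih]
    rw [aC3 h hr w, ← zc_add]

lemma notLQA {r : ℕ} (hr : 2 ≤ r) (A : ℕ → (ℕ → Fin 2) ≃ₜ (ℕ → Fin 2))
    (h : PinkPeriodicRec r (fun i => ⇑(A i))) :
    ¬ IsLocallyQuasiAnalytic
        ((fun g : (ℕ → Fin 2) ≃ₜ (ℕ → Fin 2) => ⇑g) ''
          ((Subgroup.closure (A '' {i | 1 ≤ i ∧ i ≤ r}) :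
            Subgroup ((ℕ → Fin 2) ≃ₜ (ℕ → Fin 2))) : Set ((ℕ → Fin 2) ≃ₜ (ℕ → Fin 2)))) := by
  rintro ⟨ε, hε, H⟩
  obtain ⟨n, hn⟩ : ∃ n : ℕ, (1/2:ℝ)^n < ε := exists_pow_lt_of_lt_one hε (by norm_num)
  have hnm : n ≤ (n+1) * r := by
    calc n ≤ (n+1) * 1 := by omega
    _ ≤ (n+1) * r := Nat.mul_le_mul_left _ (by omega)
  set z : ℕ → Fin 2 := fun _ => 0 with hz
  set U : Set (ℕ → Fin 2) := PiNat.cylinder z ((n+1)*r) with hU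
  have hUopen : IsOpen U := PiNat.isOpen_cylinder (fun _ => Fin 2) z ((n+1)*r)
  have hUdiam : Metric.diam U < ε := by
    have h1 : Metric.diam U ≤ (1/2)^((n+1)*r) := by
      apply Metric.diam_le_of_forall_dist_le (by positivity)
      intro x hx y hy
      have hx' := PiNat.mem_cylinder_iff.1 hx
      have hy' := PiNat.mem_cylinder_iff.1 hy
      have : x ∈ PiNat.cylinder y ((n+1)*r) :=
        PiNat.mem_cylinder_iff.2 fun i hi => by rw [hx' i hi, hy' i hi]
      exact PiNat.mem_cylinder_iff_dist_le.1 this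
    calc Metric.diam U ≤ (1/2)^((n+1)*r) := h1
    _ ≤ (1/2)^n := pow_le_pow_of_le_one (by norm_num) (by norm_num) hnm
    _ < ε := hn
  have hgmem : A r ∈ Subgroup.closure (A '' {i | 1 ≤ i ∧ i ≤ r}) :=
    Subgroup.subset_closure ⟨r, ⟨by omega, le_rfl⟩, rfl⟩
  have hG1 : A r ^ (2^(n+1)) ∈ Subgroup.closure (A '' {i | 1 ≤ i ∧ i ≤ r}) :=
    pow_mem hgmem _
  set x1 : ℕ → Fin 2 := fun j => if j = (n+1)*r then 1 else 0 with hx1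
  set V : Set (ℕ → Fin 2) := PiNat.cylinder x1 ((n+1)*r + 1) with hV
  have hVopen : IsOpen V := PiNat.isOpen_cylinder (fun _ => Fin 2) x1 _
  have hVU : V ⊆ U := by
    intro y hy
    refine PiNat.mem_cylinder_iff.2 fun i hi => ?_
    have := PiNat.mem_cylinder_iff.1 hy i (by omega)
    rw [this, hx1, hz]
    simp [Nat.ne_of_lt hi]
  have hdec : ∀ y : ℕ → Fin 2, (∀ i, i < (n+1)*r → y i = 0) →
      y = zc ((n+1)*r) (fun j => y (j + (n+1)*r)) := by
    intro y hy
    funext i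
    rw [zc_apply]
    split
    · exact hy i ‹_›
    · congr 1; omega
  have hEqV : Set.EqOn (⇑(A r ^ (2^(n+1)))) (⇑(1 : (ℕ → Fin 2) ≃ₜ (ℕ → Fin 2))) V := by
    intro y hy
    have hy' := PiNat.mem_cylinder_iff.1 hy
    have hy0 : ∀ i, i < (n+1)*r → y i = 0 := by
      intro i hi
      have := hy' i (by omega)
      rw [this, hx1]
      simp [Nat.ne_of_lt hi]
    have hym : y ((n+1)*r) = 1 := by
      have := hy' ((n+1)*r) (by omega)
      rw [this, hx1]; simp
    show (A r ^ (2^(n+1))) y = y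
    conv_lhs => rw [hdec y hy0]
    rw [aC4 hr A h (n+1) _]
    have hsc : (fun j => y (j + (n+1)*r)) = cons 1 (fun j => y (j + 1 + (n+1)*r)) := by
      funext j
      cases j with
      | zero => show y (0 + (n+1)*r) = 1; simpa using hym
      | succ j => rfl
    have hfix : (A r) (fun j => y (j + (n+1)*r)) = (fun j => y (j + (n+1)*r)) := by
      rw [hsc]
      exact (h.2.2 r hr le_rfl).2 _
    rw [hfix, ← hdec y hy0]
  have hzU : z ∈ U := PiNat.mem_cylinder_iff.2 fun i _ => rfl
  have hc := H U hUopen hUdiam _ ⟨A r ^ (2^(n+1)), hG1, rfl⟩ _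
    ⟨1, one_mem _, rfl⟩ V hVU hVopen ⟨x1, PiNat.self_mem_cylinder _ _⟩ hEqV hzU
  have hcz : (A r ^ (2^(n+1))) z = z := hc
  have hz1 : (A r) z = zc (r-1) (cons 1 z) := by
    have hzz : z = zc (r-1) (cons 0 z) := by
      have h1 : cons 0 z = zc 1 z := rfl
      rw [h1, ← zc_add]
      have h2 : r - 1 + 1 = r := by omega
      rw [h2]
      exact (zc_zero_seq r).symm
    conv_lhs => rw [hzz]
    rw [aC1 h (r-1) r (by omega) le_rfl]
    have h3 : r - (r-1) = 1 := by omega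
    rw [h3]
    exact congrArg _ (h.1 z)
  have heval : ((A r ^ (2^(n+1))) z) ((n+1)*r + (r-1)) = 1 := by
    conv_lhs => rw [show z = zc ((n+1)*r) z from ((zc_zero_seq _).symm : _)]
    rw [aC4 hr A h (n+1) z, hz1, zc_apply]
    rw [if_neg (by omega)]
    have h4 : (n+1)*r + (r-1) - (n+1)*r = r - 1 := by omega
    rw [h4, zc_apply, if_neg (lt_irrefl _)]
    simp [cons]
  rw [hcz] at heval
  simp [hz] at heval

/-- For `r ≥ 2`, Pink's recursively defined maps `a₁, …, a_r` exist and are homeomorphisms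
of `X = {0,1}^ℕ`, and the action on `X` of the group `G̃_r = ⟨a₁, …, a_r⟩` is not locally
quasi-analytic. -/
theorem stmt7 (r : ℕ) (hr : 2 ≤ r) :
    (∃ a : ℕ → (ℕ → Fin 2) → (ℕ → Fin 2), PinkPeriodicRec r a) ∧
    (∀ a : ℕ → (ℕ → Fin 2) → (ℕ → Fin 2), PinkPeriodicRec r a →
      ∀ i, 1 ≤ i → i ≤ r → IsHomeomorph (a i)) ∧
    ∀ A : ℕ → (ℕ → Fin 2) ≃ₜ (ℕ → Fin 2), PinkPeriodicRec r (fun i => ⇑(A i)) →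
      ¬ IsLocallyQuasiAnalytic
        ((fun g : (ℕ → Fin 2) ≃ₜ (ℕ → Fin 2) => ⇑g) ''
          ((Subgroup.closure (A '' {i | 1 ≤ i ∧ i ≤ r}) :
            Subgroup ((ℕ → Fin 2) ≃ₜ (ℕ → Fin 2))) : Set ((ℕ → Fin 2) ≃ₜ (ℕ → Fin 2)))) := by
  refine ⟨⟨pMap r, pMap_rec r⟩, ?_, ?_⟩
  · intro a ha i h1 h2
    rw [pMap_unique (by omega) ha i h1 h2]
    exact pMap_isHomeomorph r i
  · intro A hA
    exact notLQA hr A hA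
end

section
/- For every r ≥ 2, the group G̃_r = ⟨a₁, …, a_r⟩ ≤ Homeo({0,1}^ℕ) contains no non-Hausdorff elements for its action on {0,1}^ℕ. -/
/-- `g` is a non-Hausdorff element: it fixes a point `x`, is not the identity on any open
neighborhood of `x`, yet every open neighborhood of `x` contains a nonempty open subset
on which `g` is the identity. -/
def IsNonHausdorffElement {X : Type*} [TopologicalSpace X] (g : X → X) : Prop :=
  ∃ x : X, g x = x ∧
    (∀ W : Set X, IsOpen W → x ∈ W → ¬ Set.EqOn g id W) ∧
    (∀ W : Set X, IsOpen W → x ∈ W → ∃ O : Set X, IsOpen O ∧ O.Nonempty ∧ O ⊆ W ∧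
      Set.EqOn g id O)

namespace Pink8

abbrev X : Type := ℕ → Fin 2
abbrev H : Type := X ≃ₜ X

@[simp] lemma cons_zero (v : Fin 2) (x : X) : cons v x 0 = v := rfl
@[simp] lemma cons_succ (v : Fin 2) (x : X) (n : ℕ) : cons v x (n+1) = x n := rfl

def shf (x : X) : X := fun n => x (n+1)

lemma cons_shf (x : X) : cons (x 0) (shf x) = x := by
  funext n; cases n <;> rfl

@[simp] lemma shf_cons (v : Fin 2) (x : X) : shf (cons v x) = x := by
  funext n; rfl

lemma cons_head {v v' : Fin 2} {a b : X} (h : cons v a = cons v' b) : v = v' :=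
  congrFun h 0

lemma cons_tail {v v' : Fin 2} {a b : X} (h : cons v a = cons v' b) : a = b :=
  funext fun n => congrFun h (n+1)

lemma coe_mul (f g : H) : ⇑(f * g) = ⇑f ∘ ⇑g := rfl
lemma coe_one : ⇑(1 : H) = id := rfl
lemma coe_inv (f : H) : ⇑(f⁻¹) = ⇑(f.symm) := rfl

/-- `g` maps the cylinder `v·*` to `v'·*` acting by `h` on tails. -/
def Step (g : H) (v v' : Fin 2) (h : H) : Prop := ∀ w, g (cons v w) = cons v' (h w)

lemma Step.mul {a b : H} {v v' v'' : Fin 2} {h₁ h₂ : H}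
    (ha : Step a v v' h₁) (hb : Step b v' v'' h₂) : Step (b * a) v v'' (h₂ * h₁) := by
  intro w
  show b (a (cons v w)) = cons v'' (h₂ (h₁ w))
  rw [ha w, hb (h₁ w)]

lemma Step.inv {g : H} {v v' : Fin 2} {h : H} (hg : Step g v v' h) :
    Step g⁻¹ v' v h⁻¹ := by
  intro w
  have h1 : g (cons v (h⁻¹ w)) = cons v' w := by
    rw [hg (h⁻¹ w)]
    exact congrArg (cons v') (h.apply_symm_apply w)
  calc g⁻¹ (cons v' w) = g⁻¹ (g (cons v (h⁻¹ w))) := by rw [h1]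
    _ = cons v (h⁻¹ w) := g.symm_apply_apply _

lemma step_one (v : Fin 2) : Step (1 : H) v v 1 := fun _ => rfl

lemma step_unique {g : H} {v v' v'' : Fin 2} {h h' : H}
    (h1 : Step g v v' h) (h2 : Step g v v'' h') : v' = v'' ∧ h = h' := by
  constructor
  · exact cons_head ((h1 (fun _ => 0)).symm.trans (h2 (fun _ => 0)))
  · exact Homeomorph.ext fun w => cons_tail ((h1 w).symm.trans (h2 w))

lemma fin2 (v : Fin 2) : v = 0 ∨ v = 1 := by omega

/-- The "nucleus": identity, generators and their inverses, and the special pairs. -/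
def Nuc (r : ℕ) (A : ℕ → H) (g : H) : Prop :=
  g = 1 ∨ (∃ i, 1 ≤ i ∧ i ≤ r ∧ (g = A i ∨ g = (A i)⁻¹)) ∨
    (∃ i j, 1 ≤ i ∧ i ≤ r ∧ 1 ≤ j ∧ j ≤ r ∧ i ≠ j ∧ g = (A j)⁻¹ * A i)

def Small (r : ℕ) (A : ℕ → H) (g : H) : Prop :=
  g = 1 ∨ (∃ i, 1 ≤ i ∧ i ≤ r ∧ (g = A i ∨ g = (A i)⁻¹))

/-- Along the ray `x`, iterated sections of `g` eventually land in the nucleus. -/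
inductive Ev (r : ℕ) (A : ℕ → H) : X → H → Prop
  | nuc (x : X) (g : H) : Nuc r A g → Ev r A x g
  | step (x : X) (g : H) (v' : Fin 2) (h : H) :
      Step g (x 0) v' h → Ev r A (shf x) h → Ev r A x g

open Classical in
noncomputable def secF (g : H) (v : Fin 2) : H :=
  if h : ∃ p : H × Fin 2, Step g v p.2 p.1 then h.choose.1 else 1

lemma step_secF {g : H} {v v' : Fin 2} {h : H} (hs : Step g v v' h) : secF g v = h := by
  have hex : ∃ p : H × Fin 2, Step g v p.2 p.1 := ⟨(h, v'), hs⟩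
  unfold secF
  rw [dif_pos hex]
  exact (step_unique hex.choose_spec hs).2

def outF (g : H) (v : Fin 2) : Fin 2 := g (cons v (fun _ => 0)) 0

lemma step_outF {g : H} {v v' : Fin 2} {h : H} (hs : Step g v v' h) : outF g v = v' := by
  unfold outF
  rw [hs]
  rfl

noncomputable def chainF : ℕ → H → X → H
  | 0, g, _ => g
  | n+1, g, x => chainF n (secF g (x 0)) (shf x)

noncomputable def imRay (g : H) (x : X) : X := fun n => outF (chainF n g x) (x n)


section Main

variable {r : ℕ} {A : ℕ → H}

lemma nuc_one : Nuc r A 1 := Or.inl rfl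
lemma nuc_pos {i : ℕ} (h1 : 1 ≤ i) (h2 : i ≤ r) : Nuc r A (A i) :=
  Or.inr (Or.inl ⟨i, h1, h2, Or.inl rfl⟩)
lemma nuc_neg {i : ℕ} (h1 : 1 ≤ i) (h2 : i ≤ r) : Nuc r A ((A i)⁻¹) :=
  Or.inr (Or.inl ⟨i, h1, h2, Or.inr rfl⟩)
lemma nuc_pair {i j : ℕ} (h1 : 1 ≤ i) (h2 : i ≤ r) (h3 : 1 ≤ j) (h4 : j ≤ r)
    (h5 : i ≠ j) : Nuc r A ((A j)⁻¹ * A i) :=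
  Or.inr (Or.inr ⟨i, j, h1, h2, h3, h4, h5, rfl⟩)
lemma small_nuc {g : H} (h : Small r A g) : Nuc r A g := h.elim Or.inl (Or.inr ∘ Or.inl)

variable (hr : 2 ≤ r) (hA : PinkPeriodicRec r fun i => ⇑(A i))

section Steps
include hA

lemma s10 : Step (A 1) 0 1 1 := fun w => hA.1 w
lemma s11 : Step (A 1) 1 0 (A r) := fun w => hA.2.1 w
lemma si0 {i : ℕ} (h2 : 2 ≤ i) (hir : i ≤ r) : Step (A i) 0 0 (A (i-1)) :=
  fun w => (hA.2.2 i h2 hir).1 w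
lemma si1 {i : ℕ} (h2 : 2 ≤ i) (hir : i ≤ r) : Step (A i) 1 1 1 :=
  fun w => (hA.2.2 i h2 hir).2 w

lemma s10' : Step ((A 1)⁻¹) 1 0 1 := by
  have := (s10 hA).inv; rwa [inv_one] at this
lemma s11' : Step ((A 1)⁻¹) 0 1 ((A r)⁻¹) := (s11 hA).inv
lemma si0' {i : ℕ} (h2 : 2 ≤ i) (hir : i ≤ r) : Step ((A i)⁻¹) 0 0 ((A (i-1))⁻¹) :=
  (si0 hA h2 hir).inv
lemma si1' {i : ℕ} (h2 : 2 ≤ i) (hir : i ≤ r) : Step ((A i)⁻¹) 1 1 1 := by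
  have := (si1 hA h2 hir).inv; rwa [inv_one] at this

end Steps

end Main


section Comb

variable {r : ℕ} {A : ℕ → H}

lemma ev_step_nuc {x : X} {g h : H} {v' : Fin 2}
    (hs : Step g (x 0) v' h) (hn : Nuc r A h) : Ev r A x g :=
  Ev.step x g v' h hs (Ev.nuc _ _ hn)

lemma ev_step_nuc' (x : X) (g : H) (v' : Fin 2) (h : H)
    (hs : Step g (x 0) v' h) (hn : Nuc r A h) : Ev r A x g :=
  Ev.step x g v' h hs (Ev.nuc _ _ hn)

variable (hr : 2 ≤ r) (hA : PinkPeriodicRec r fun i => ⇑(A i))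
include hr hA

/-- (+,+) pairs contract. -/
lemma evPP : ∀ j, 1 ≤ j → j ≤ r → ∀ i, 1 ≤ i → i ≤ r → ∀ x, Ev r A x (A j * A i) := by
  intro j
  induction j using Nat.strong_induction_on with
  | _ j IH =>
  intro hj1 hjr i hi1 hir x
  rcases Nat.lt_or_ge i 2 with hi2 | hi2
  · have hi : i = 1 := by omega
    subst hi
    rcases fin2 (x 0) with h0 | h0
    · rcases Nat.lt_or_ge j 2 with hj2 | hj2
      · have hj : j = 1 := by omega
        subst hj
        refine ev_step_nuc' x _ 0 (A r * 1) ?_ ?_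
        · rw [h0]; exact (s10 hA).mul (s11 hA)
        · rw [mul_one]; exact nuc_pos (by omega) le_rfl
      · refine ev_step_nuc' x _ 1 (1 * 1) ?_ ?_
        · rw [h0]; exact (s10 hA).mul (si1 hA hj2 hjr)
        · rw [one_mul]; exact nuc_one
    · rcases Nat.lt_or_ge j 2 with hj2 | hj2
      · have hj : j = 1 := by omega
        subst hj
        refine ev_step_nuc' x _ 1 (1 * A r) ?_ ?_
        · rw [h0]; exact (s11 hA).mul (s10 hA)
        · rw [one_mul]; exact nuc_pos (by omega) le_rfl
      · refine Ev.step x _ 0 (A (j-1) * A r) ?_ ?_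
        · rw [h0]; exact (s11 hA).mul (si0 hA hj2 hjr)
        · exact IH (j-1) (by omega) (by omega) (by omega) r (by omega) le_rfl (shf x)
  · rcases fin2 (x 0) with h0 | h0
    · rcases Nat.lt_or_ge j 2 with hj2 | hj2
      · have hj : j = 1 := by omega
        subst hj
        refine ev_step_nuc' x _ 1 (1 * A (i-1)) ?_ ?_
        · rw [h0]; exact (si0 hA hi2 hir).mul (s10 hA)
        · rw [one_mul]; exact nuc_pos (by omega) (by omega)
      · refine Ev.step x _ 0 (A (j-1) * A (i-1)) ?_ ?_
        · rw [h0]; exact (si0 hA hi2 hir).mul (si0 hA hj2 hjr)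
        · exact IH (j-1) (by omega) (by omega) (by omega) (i-1) (by omega) (by omega) (shf x)
    · rcases Nat.lt_or_ge j 2 with hj2 | hj2
      · have hj : j = 1 := by omega
        subst hj
        refine ev_step_nuc' x _ 0 (A r * 1) ?_ ?_
        · rw [h0]; exact (si1 hA hi2 hir).mul (s11 hA)
        · rw [mul_one]; exact nuc_pos (by omega) le_rfl
      · refine ev_step_nuc' x _ 1 (1 * 1) ?_ ?_
        · rw [h0]; exact (si1 hA hi2 hir).mul (si1 hA hj2 hjr)
        · rw [one_mul]; exact nuc_one

/-- (-,-) pairs contract. -/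
lemma evMM : ∀ i, 1 ≤ i → i ≤ r → ∀ j, 1 ≤ j → j ≤ r → ∀ x,
    Ev r A x ((A j)⁻¹ * (A i)⁻¹) := by
  intro i
  induction i using Nat.strong_induction_on with
  | _ i IH =>
  intro hi1 hir j hj1 hjr x
  rcases Nat.lt_or_ge i 2 with hi2 | hi2
  · have hi : i = 1 := by omega
    subst hi
    rcases fin2 (x 0) with h0 | h0
    · rcases Nat.lt_or_ge j 2 with hj2 | hj2
      · have hj : j = 1 := by omega
        subst hj
        refine ev_step_nuc' x _ 0 (1 * (A r)⁻¹) ?_ ?_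
        · rw [h0]; exact (s11' hA).mul (s10' hA)
        · rw [one_mul]; exact nuc_neg (by omega) le_rfl
      · refine ev_step_nuc' x _ 1 (1 * (A r)⁻¹) ?_ ?_
        · rw [h0]; exact (s11' hA).mul (si1' hA hj2 hjr)
        · rw [one_mul]; exact nuc_neg (by omega) le_rfl
    · rcases Nat.lt_or_ge j 2 with hj2 | hj2
      · have hj : j = 1 := by omega
        subst hj
        refine ev_step_nuc' x _ 1 ((A r)⁻¹ * 1) ?_ ?_
        · rw [h0]; exact (s10' hA).mul (s11' hA)
        · rw [mul_one]; exact nuc_neg (by omega) le_rfl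
      · refine ev_step_nuc' x _ 0 ((A (j-1))⁻¹ * 1) ?_ ?_
        · rw [h0]; exact (s10' hA).mul (si0' hA hj2 hjr)
        · rw [mul_one]; exact nuc_neg (by omega) (by omega)
  · rcases fin2 (x 0) with h0 | h0
    · rcases Nat.lt_or_ge j 2 with hj2 | hj2
      · have hj : j = 1 := by omega
        subst hj
        refine Ev.step x _ 1 ((A r)⁻¹ * (A (i-1))⁻¹) ?_ ?_
        · rw [h0]; exact (si0' hA hi2 hir).mul (s11' hA)
        · exact IH (i-1) (by omega) (by omega) (by omega) r (by omega) le_rfl (shf x)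
      · refine Ev.step x _ 0 ((A (j-1))⁻¹ * (A (i-1))⁻¹) ?_ ?_
        · rw [h0]; exact (si0' hA hi2 hir).mul (si0' hA hj2 hjr)
        · exact IH (i-1) (by omega) (by omega) (by omega) (j-1) (by omega) (by omega) (shf x)
    · rcases Nat.lt_or_ge j 2 with hj2 | hj2
      · have hj : j = 1 := by omega
        subst hj
        refine ev_step_nuc' x _ 0 (1 * 1) ?_ ?_
        · rw [h0]; exact (si1' hA hi2 hir).mul (s10' hA)
        · rw [one_mul]; exact nuc_one
      · refine ev_step_nuc' x _ 1 (1 * 1) ?_ ?_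
        · rw [h0]; exact (si1' hA hi2 hir).mul (si1' hA hj2 hjr)
        · rw [one_mul]; exact nuc_one

/-- (-,+) pairs contract. -/
lemma evMP : ∀ i, 1 ≤ i → i ≤ r → ∀ j, 1 ≤ j → j ≤ r → ∀ x,
    Ev r A x (A j * (A i)⁻¹) := by
  intro i
  induction i using Nat.strong_induction_on with
  | _ i IH =>
  intro hi1 hir j hj1 hjr x
  by_cases hij : i = j
  · subst hij
    exact Ev.nuc _ _ (by rw [mul_inv_cancel]; exact nuc_one)
  rcases Nat.lt_or_ge i 2 with hi2 | hi2
  · have hi : i = 1 := by omega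
    subst hi
    have hj2 : 2 ≤ j := by omega
    rcases fin2 (x 0) with h0 | h0
    · refine ev_step_nuc' x _ 1 (1 * (A r)⁻¹) ?_ ?_
      · rw [h0]; exact (s11' hA).mul (si1 hA hj2 hjr)
      · rw [one_mul]; exact nuc_neg (by omega) le_rfl
    · refine ev_step_nuc' x _ 0 (A (j-1) * 1) ?_ ?_
      · rw [h0]; exact (s10' hA).mul (si0 hA hj2 hjr)
      · rw [mul_one]; exact nuc_pos (by omega) (by omega)
  · rcases fin2 (x 0) with h0 | h0
    · rcases Nat.lt_or_ge j 2 with hj2 | hj2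
      · have hj : j = 1 := by omega
        subst hj
        refine ev_step_nuc' x _ 1 (1 * (A (i-1))⁻¹) ?_ ?_
        · rw [h0]; exact (si0' hA hi2 hir).mul (s10 hA)
        · rw [one_mul]; exact nuc_neg (by omega) (by omega)
      · refine Ev.step x _ 0 (A (j-1) * (A (i-1))⁻¹) ?_ ?_
        · rw [h0]; exact (si0' hA hi2 hir).mul (si0 hA hj2 hjr)
        · exact IH (i-1) (by omega) (by omega) (by omega) (j-1) (by omega) (by omega) (shf x)
    · rcases Nat.lt_or_ge j 2 with hj2 | hj2
      · have hj : j = 1 := by omega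
        subst hj
        refine ev_step_nuc' x _ 0 (A r * 1) ?_ ?_
        · rw [h0]; exact (si1' hA hi2 hir).mul (s11 hA)
        · rw [mul_one]; exact nuc_pos (by omega) le_rfl
      · refine ev_step_nuc' x _ 1 (1 * 1) ?_ ?_
        · rw [h0]; exact (si1' hA hi2 hir).mul (si1 hA hj2 hjr)
        · rw [one_mul]; exact nuc_one

/-- Steps of the nucleus pairs. -/
lemma sP10 {j : ℕ} (hj2 : 2 ≤ j) (hjr : j ≤ r) :
    Step ((A j)⁻¹ * A 1) 0 1 (1 * 1) := (s10 hA).mul (si1' hA hj2 hjr)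
lemma sP11 {j : ℕ} (hj2 : 2 ≤ j) (hjr : j ≤ r) :
    Step ((A j)⁻¹ * A 1) 1 0 ((A (j-1))⁻¹ * A r) := (s11 hA).mul (si0' hA hj2 hjr)
lemma sP20 {i : ℕ} (hi2 : 2 ≤ i) (hir : i ≤ r) :
    Step ((A 1)⁻¹ * A i) 0 1 ((A r)⁻¹ * A (i-1)) := (si0 hA hi2 hir).mul (s11' hA)
lemma sP21 {i : ℕ} (hi2 : 2 ≤ i) (hir : i ≤ r) :
    Step ((A 1)⁻¹ * A i) 1 0 (1 * 1) := (si1 hA hi2 hir).mul (s10' hA)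
lemma sP30 {i j : ℕ} (hi2 : 2 ≤ i) (hir : i ≤ r) (hj2 : 2 ≤ j) (hjr : j ≤ r) :
    Step ((A j)⁻¹ * A i) 0 0 ((A (j-1))⁻¹ * A (i-1)) := (si0 hA hi2 hir).mul (si0' hA hj2 hjr)
lemma sP31 {i j : ℕ} (hi2 : 2 ≤ i) (hir : i ≤ r) (hj2 : 2 ≤ j) (hjr : j ≤ r) :
    Step ((A j)⁻¹ * A i) 1 1 (1 * 1) := (si1 hA hi2 hir).mul (si1' hA hj2 hjr)

/-- Triples (pair · positive letter) contract. -/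
lemma evTP : ∀ i, 1 ≤ i → i ≤ r → ∀ j, 1 ≤ j → j ≤ r → i ≠ j →
    ∀ k, 1 ≤ k → k ≤ r → ∀ x, Ev r A x (((A j)⁻¹ * A i) * A k) := by
  intro i
  induction i using Nat.strong_induction_on with
  | _ i IH =>
  intro hi1 hir j hj1 hjr hij k hk1 hkr x
  rcases Nat.lt_or_ge k 2 with hk2 | hk2
  · have hk : k = 1 := by omega
    subst hk
    rcases fin2 (x 0) with h0 | h0
    · -- A 1 : 0 → 1, sec 1 ; P at 1
      rcases Nat.lt_or_ge i 2 with hi2 | hi2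
      · have hi : i = 1 := by omega
        subst hi
        have hj2 : 2 ≤ j := by omega
        refine ev_step_nuc' x _ 0 (((A (j-1))⁻¹ * A r) * 1) ?_ ?_
        · rw [h0]; exact (s10 hA).mul (sP11 hr hA hj2 hjr)
        · rw [mul_one]; exact nuc_pair (by omega) le_rfl (by omega) (by omega) (by omega)
      · rcases Nat.lt_or_ge j 2 with hj2 | hj2
        · have hj : j = 1 := by omega
          subst hj
          refine ev_step_nuc' x _ 0 ((1 * 1) * 1) ?_ ?_
          · rw [h0]; exact (s10 hA).mul (sP21 hr hA hi2 hir)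
          · rw [mul_one, one_mul]; exact nuc_one
        · refine ev_step_nuc' x _ 1 ((1 * 1) * 1) ?_ ?_
          · rw [h0]; exact (s10 hA).mul (sP31 hr hA hi2 hir hj2 hjr)
          · rw [mul_one, one_mul]; exact nuc_one
    · -- A 1 : 1 → 0, sec A r ; P at 0
      rcases Nat.lt_or_ge i 2 with hi2 | hi2
      · have hi : i = 1 := by omega
        subst hi
        have hj2 : 2 ≤ j := by omega
        refine ev_step_nuc' x _ 1 ((1 * 1) * A r) ?_ ?_
        · rw [h0]; exact (s11 hA).mul (sP10 hr hA hj2 hjr)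
        · rw [one_mul, one_mul]; exact nuc_pos (by omega) le_rfl
      · rcases Nat.lt_or_ge j 2 with hj2 | hj2
        · have hj : j = 1 := by omega
          subst hj
          refine Ev.step x _ 1 (((A r)⁻¹ * A (i-1)) * A r) ?_ ?_
          · rw [h0]; exact (s11 hA).mul (sP20 hr hA hi2 hir)
          · exact IH (i-1) (by omega) (by omega) (by omega) r (by omega) le_rfl (by omega)
              r (by omega) le_rfl (shf x)
        · refine Ev.step x _ 0 (((A (j-1))⁻¹ * A (i-1)) * A r) ?_ ?_
          · rw [h0]; exact (s11 hA).mul (sP30 hr hA hi2 hir hj2 hjr)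
          · exact IH (i-1) (by omega) (by omega) (by omega) (j-1) (by omega) (by omega)
              (by omega) r (by omega) le_rfl (shf x)
  · rcases fin2 (x 0) with h0 | h0
    · -- A k : 0 → 0, sec A (k-1) ; P at 0
      rcases Nat.lt_or_ge i 2 with hi2 | hi2
      · have hi : i = 1 := by omega
        subst hi
        have hj2 : 2 ≤ j := by omega
        refine ev_step_nuc' x _ 1 ((1 * 1) * A (k-1)) ?_ ?_
        · rw [h0]; exact (si0 hA hk2 hkr).mul (sP10 hr hA hj2 hjr)
        · rw [one_mul, one_mul]; exact nuc_pos (by omega) (by omega)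
      · rcases Nat.lt_or_ge j 2 with hj2 | hj2
        · have hj : j = 1 := by omega
          subst hj
          refine Ev.step x _ 1 (((A r)⁻¹ * A (i-1)) * A (k-1)) ?_ ?_
          · rw [h0]; exact (si0 hA hk2 hkr).mul (sP20 hr hA hi2 hir)
          · exact IH (i-1) (by omega) (by omega) (by omega) r (by omega) le_rfl (by omega)
              (k-1) (by omega) (by omega) (shf x)
        · refine Ev.step x _ 0 (((A (j-1))⁻¹ * A (i-1)) * A (k-1)) ?_ ?_
          · rw [h0]; exact (si0 hA hk2 hkr).mul (sP30 hr hA hi2 hir hj2 hjr)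
          · exact IH (i-1) (by omega) (by omega) (by omega) (j-1) (by omega) (by omega)
              (by omega) (k-1) (by omega) (by omega) (shf x)
    · -- A k : 1 → 1, sec 1 ; P at 1
      rcases Nat.lt_or_ge i 2 with hi2 | hi2
      · have hi : i = 1 := by omega
        subst hi
        have hj2 : 2 ≤ j := by omega
        refine ev_step_nuc' x _ 0 (((A (j-1))⁻¹ * A r) * 1) ?_ ?_
        · rw [h0]; exact (si1 hA hk2 hkr).mul (sP11 hr hA hj2 hjr)
        · rw [mul_one]; exact nuc_pair (by omega) le_rfl (by omega) (by omega) (by omega)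
      · rcases Nat.lt_or_ge j 2 with hj2 | hj2
        · have hj : j = 1 := by omega
          subst hj
          refine ev_step_nuc' x _ 0 ((1 * 1) * 1) ?_ ?_
          · rw [h0]; exact (si1 hA hk2 hkr).mul (sP21 hr hA hi2 hir)
          · rw [mul_one, one_mul]; exact nuc_one
        · refine ev_step_nuc' x _ 1 ((1 * 1) * 1) ?_ ?_
          · rw [h0]; exact (si1 hA hk2 hkr).mul (sP31 hr hA hi2 hir hj2 hjr)
          · rw [mul_one, one_mul]; exact nuc_one

/-- Triples (pair · negative letter) contract. -/
lemma evTM : ∀ k, 1 ≤ k → k ≤ r → ∀ i, 1 ≤ i → i ≤ r → ∀ j, 1 ≤ j → j ≤ r →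
    i ≠ j → i ≠ k → ∀ x, Ev r A x (((A j)⁻¹ * A i) * (A k)⁻¹) := by
  intro k
  induction k using Nat.strong_induction_on with
  | _ k IH =>
  intro hk1 hkr i hi1 hir j hj1 hjr hij hik x
  rcases Nat.lt_or_ge k 2 with hk2 | hk2
  · have hk : k = 1 := by omega
    subst hk
    have hi2 : 2 ≤ i := by omega
    rcases fin2 (x 0) with h0 | h0
    · -- (A 1)⁻¹ : 0 → 1, sec (A r)⁻¹ ; P at 1
      rcases Nat.lt_or_ge j 2 with hj2 | hj2
      · have hj : j = 1 := by omega
        subst hj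
        refine ev_step_nuc' x _ 0 ((1 * 1) * (A r)⁻¹) ?_ ?_
        · rw [h0]; exact (s11' hA).mul (sP21 hr hA hi2 hir)
        · rw [one_mul, one_mul]; exact nuc_neg (by omega) le_rfl
      · refine ev_step_nuc' x _ 1 ((1 * 1) * (A r)⁻¹) ?_ ?_
        · rw [h0]; exact (s11' hA).mul (sP31 hr hA hi2 hir hj2 hjr)
        · rw [one_mul, one_mul]; exact nuc_neg (by omega) le_rfl
    · -- (A 1)⁻¹ : 1 → 0, sec 1 ; P at 0
      rcases Nat.lt_or_ge j 2 with hj2 | hj2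
      · have hj : j = 1 := by omega
        subst hj
        refine ev_step_nuc' x _ 1 (((A r)⁻¹ * A (i-1)) * 1) ?_ ?_
        · rw [h0]; exact (s10' hA).mul (sP20 hr hA hi2 hir)
        · rw [mul_one]; exact nuc_pair (by omega) (by omega) (by omega) le_rfl (by omega)
      · refine ev_step_nuc' x _ 0 (((A (j-1))⁻¹ * A (i-1)) * 1) ?_ ?_
        · rw [h0]; exact (s10' hA).mul (sP30 hr hA hi2 hir hj2 hjr)
        · rw [mul_one]; exact nuc_pair (by omega) (by omega) (by omega) (by omega) (by omega)
  · rcases fin2 (x 0) with h0 | h0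
    · -- (A k)⁻¹ : 0 → 0, sec (A (k-1))⁻¹ ; P at 0
      rcases Nat.lt_or_ge i 2 with hi2 | hi2
      · have hi : i = 1 := by omega
        subst hi
        have hj2 : 2 ≤ j := by omega
        refine ev_step_nuc' x _ 1 ((1 * 1) * (A (k-1))⁻¹) ?_ ?_
        · rw [h0]; exact (si0' hA hk2 hkr).mul (sP10 hr hA hj2 hjr)
        · rw [one_mul, one_mul]; exact nuc_neg (by omega) (by omega)
      · rcases Nat.lt_or_ge j 2 with hj2 | hj2
        · have hj : j = 1 := by omega
          subst hj
          refine Ev.step x _ 1 (((A r)⁻¹ * A (i-1)) * (A (k-1))⁻¹) ?_ ?_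
          · rw [h0]; exact (si0' hA hk2 hkr).mul (sP20 hr hA hi2 hir)
          · exact IH (k-1) (by omega) (by omega) (by omega) (i-1) (by omega) (by omega)
              r (by omega) le_rfl (by omega) (by omega) (shf x)
        · refine Ev.step x _ 0 (((A (j-1))⁻¹ * A (i-1)) * (A (k-1))⁻¹) ?_ ?_
          · rw [h0]; exact (si0' hA hk2 hkr).mul (sP30 hr hA hi2 hir hj2 hjr)
          · exact IH (k-1) (by omega) (by omega) (by omega) (i-1) (by omega) (by omega)
              (j-1) (by omega) (by omega) (by omega) (by omega) (shf x)
    · -- (A k)⁻¹ : 1 → 1, sec 1 ; P at 1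
      rcases Nat.lt_or_ge i 2 with hi2 | hi2
      · have hi : i = 1 := by omega
        subst hi
        have hj2 : 2 ≤ j := by omega
        refine ev_step_nuc' x _ 0 (((A (j-1))⁻¹ * A r) * 1) ?_ ?_
        · rw [h0]; exact (si1' hA hk2 hkr).mul (sP11 hr hA hj2 hjr)
        · rw [mul_one]; exact nuc_pair (by omega) le_rfl (by omega) (by omega) (by omega)
      · rcases Nat.lt_or_ge j 2 with hj2 | hj2
        · have hj : j = 1 := by omega
          subst hj
          refine ev_step_nuc' x _ 0 ((1 * 1) * 1) ?_ ?_
          · rw [h0]; exact (si1' hA hk2 hkr).mul (sP21 hr hA hi2 hir)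
          · rw [mul_one, one_mul]; exact nuc_one
        · refine ev_step_nuc' x _ 1 ((1 * 1) * 1) ?_ ?_
          · rw [h0]; exact (si1' hA hk2 hkr).mul (sP31 hr hA hi2 hir hj2 hjr)
          · rw [mul_one, one_mul]; exact nuc_one


/-- Any nucleus element times a small element eventually contracts. -/
lemma nuc_mul_small {b a : H} (hb : Nuc r A b) (ha : Small r A a) (x : X) :
    Ev r A x (b * a) := by
  rcases ha with ha | ⟨i, hi1, hir, ha⟩
  · subst ha
    rw [mul_one]; exact Ev.nuc _ _ hb
  rcases hb with hb | ⟨j, hj1, hjr, hb⟩ | ⟨i', j, hi'1, hi'r, hj1, hjr, hij, hb⟩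
  · subst hb
    rw [one_mul]
    rcases ha with ha | ha <;> subst ha
    · exact Ev.nuc _ _ (nuc_pos hi1 hir)
    · exact Ev.nuc _ _ (nuc_neg hi1 hir)
  · rcases hb with hb | hb <;> rcases ha with ha | ha <;> subst hb <;> subst ha
    · exact evPP hr hA j hj1 hjr i hi1 hir x
    · exact evMP hr hA i hi1 hir j hj1 hjr x
    · by_cases hij : i = j
      · subst hij
        exact Ev.nuc _ _ (by rw [inv_mul_cancel]; exact nuc_one)
      · exact Ev.nuc _ _ (nuc_pair hi1 hir hj1 hjr (fun h => hij h))
    · exact evMM hr hA i hi1 hir j hj1 hjr x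
  · subst hb
    rcases ha with ha | ha <;> subst ha
    · exact evTP hr hA i' hi'1 hi'r j hj1 hjr hij i hi1 hir x
    · by_cases hik : i' = i
      · subst hik
        have he : ((A j)⁻¹ * A i') * (A i')⁻¹ = (A j)⁻¹ := by
          rw [mul_assoc, mul_inv_cancel, mul_one]
        rw [he]
        exact Ev.nuc _ _ (nuc_neg hj1 hjr)
      · exact evTM hr hA i hi1 hir i' hi'1 hi'r j hj1 hjr hij hik x

omit hr in
lemma small_step (ha : Small r A a) (v : Fin 2) :
    ∃ v' a', Step a v v' a' ∧ Small r A a' := by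
  rcases ha with ha | ⟨i, hi1, hir, ha⟩
  · subst ha; exact ⟨v, 1, step_one v, Or.inl rfl⟩
  have h1r : 1 ≤ r := le_trans hi1 hir
  rcases Nat.lt_or_ge i 2 with hi2 | hi2
  · have hi : i = 1 := by omega
    subst hi
    rcases ha with ha | ha <;> subst ha <;> rcases fin2 v with hv | hv <;> subst hv
    · exact ⟨1, 1, s10 hA, Or.inl rfl⟩
    · exact ⟨0, A r, s11 hA, Or.inr ⟨r, h1r, le_rfl, Or.inl rfl⟩⟩
    · exact ⟨1, (A r)⁻¹, s11' hA, Or.inr ⟨r, h1r, le_rfl, Or.inr rfl⟩⟩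
    · exact ⟨0, 1, s10' hA, Or.inl rfl⟩
  · rcases ha with ha | ha <;> subst ha <;> rcases fin2 v with hv | hv <;> subst hv
    · exact ⟨0, A (i-1), si0 hA hi2 hir, Or.inr ⟨i-1, by omega, by omega, Or.inl rfl⟩⟩
    · exact ⟨1, 1, si1 hA hi2 hir, Or.inl rfl⟩
    · exact ⟨0, (A (i-1))⁻¹, si0' hA hi2 hir, Or.inr ⟨i-1, by omega, by omega, Or.inr rfl⟩⟩
    · exact ⟨1, 1, si1' hA hi2 hir, Or.inl rfl⟩

omit hr in
lemma small_sec (ha : Small r A a) (v : Fin 2) :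
    Step a v (outF a v) (secF a v) ∧ Small r A (secF a v) := by
  obtain ⟨v', a', hs, hsm⟩ := small_step hA ha v
  rw [step_outF hs, step_secF hs]
  exact ⟨hs, hsm⟩

lemma ev_mul_small {y : X} {b : H} (hb : Ev r A y b) :
    ∀ a x, Small r A a → y = imRay a x → Ev r A x (b * a) := by
  induction hb with
  | nuc y b hn =>
    intro a x ha _
    exact nuc_mul_small hr hA hn ha x
  | step y b v' h hs hev IH =>
    intro a x ha hy
    have hsa := small_sec hA ha (x 0)
    have h0 : y 0 = outF a (x 0) := by rw [hy]; rfl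
    refine Ev.step x _ v' (h * secF a (x 0)) ?_ ?_
    · exact Step.mul hsa.1 (h0 ▸ hs)
    · refine IH (secF a (x 0)) (shf x) hsa.2 ?_
      funext n
      show y (n+1) = imRay (secF a (x 0)) (shf x) n
      rw [hy]
      rfl

lemma ev_all {b : H} (hb : ∀ y, Ev r A y b) {a : H} (ha : Small r A a) (x : X) :
    Ev r A x (b * a) :=
  ev_mul_small hr hA (hb (imRay a x)) a x ha rfl

lemma ev_list : ∀ l : List H, (∀ g ∈ l, Small r A g) → ∀ x, Ev r A x l.prod := by
  intro l
  induction l using List.reverseRecOn with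
  | nil =>
    intro _ x
    exact Ev.nuc _ _ (by rw [List.prod_nil]; exact nuc_one)
  | append_singleton t a IH =>
    intro hs x
    rw [List.prod_append, List.prod_singleton]
    exact ev_all hr hA (fun y => IH (fun g hg => hs g (List.mem_append_left _ hg)) y)
      (hs a (by simp)) x


end Comb

/-! ### Non-Hausdorff points and their transfer along sections -/

def NHat (g : H) (x : X) : Prop :=
  ⇑g x = x ∧
    (∀ W : Set X, IsOpen W → x ∈ W → ¬ Set.EqOn (⇑g) id W) ∧
    (∀ W : Set X, IsOpen W → x ∈ W → ∃ O : Set X, IsOpen O ∧ O.Nonempty ∧ O ⊆ W ∧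
      Set.EqOn (⇑g) id O)

lemma cont_shf : Continuous shf :=
  continuous_pi fun n => continuous_apply (n+1)

lemma cont_cons (v : Fin 2) : Continuous (cons v) := by
  refine continuous_pi fun n => ?_
  cases n with
  | zero => exact continuous_const
  | succ n => exact continuous_apply n

lemma isOpen_digit (k : ℕ) (c : Fin 2) : IsOpen {y : X | y k = c} := by
  have he : {y : X | y k = c} = (fun y : X => y k) ⁻¹' {c} := rfl
  rw [he]
  exact (continuous_apply k).isOpen_preimage _ (isOpen_discrete _)

lemma isOpen_zeros (m : ℕ) : IsOpen {y : X | ∀ k, k + 2 ≤ m → y k = 0} := by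
  have he : {y : X | ∀ k, k + 2 ≤ m → y k = 0}
      = ⋂ k ∈ Finset.range m, {y : X | k + 2 ≤ m → y k = 0} := by
    ext y
    simp only [Set.mem_iInter, Set.mem_setOf_eq, Finset.mem_range]
    constructor
    · intro h k _ hk
      exact h k hk
    · intro h k hk
      exact h k (by omega) hk
  rw [he]
  refine isOpen_biInter_finset ?_
  intro k _
  by_cases hk : k + 2 ≤ m
  · have h2 : {y : X | k + 2 ≤ m → y k = 0} = {y : X | y k = 0} := by
      ext y
      exact ⟨fun h => h hk, fun h _ => h⟩
    rw [h2]
    exact isOpen_digit k 0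
  · have h2 : {y : X | k + 2 ≤ m → y k = 0} = Set.univ := by
      ext y
      exact ⟨fun _ => trivial, fun _ h => absurd h hk⟩
    rw [h2]
    exact isOpen_univ

lemma NHat.step {g h : H} {x : X} {v' : Fin 2} (hn : NHat g x) (hs : Step g (x 0) v' h) :
    NHat h (shf x) := by
  obtain ⟨hfix, hnot, hloc⟩ := hn
  have hx : cons (x 0) (shf x) = x := cons_shf x
  have hgx : cons v' (h (shf x)) = x := by
    rw [← hs (shf x), hx, hfix]
  have hv : v' = x 0 := congrFun hgx 0
  subst hv
  have hfix' : ⇑h (shf x) = shf x := funext fun n => congrFun hgx (n+1)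
  have hWopen : ∀ W' : Set X, IsOpen W' →
      IsOpen ({y : X | y 0 = x 0} ∩ shf ⁻¹' W') := fun W' hW' =>
    (isOpen_digit 0 (x 0)).inter (cont_shf.isOpen_preimage _ hW')
  refine ⟨hfix', ?_, ?_⟩
  · intro W' hW' hmem hEq
    refine hnot ({y : X | y 0 = x 0} ∩ shf ⁻¹' W') (hWopen W' hW') ⟨rfl, hmem⟩ ?_
    intro y hy
    have hyc : cons (x 0) (shf y) = y := by
      have h1 : y 0 = x 0 := hy.1
      rw [← h1]
      exact cons_shf y
    show ⇑g y = y
    calc ⇑g y = g (cons (x 0) (shf y)) := by rw [hyc]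
      _ = cons (x 0) (h (shf y)) := hs (shf y)
      _ = cons (x 0) (shf y) := congrArg (cons (x 0)) (show ⇑h (shf y) = shf y from hEq hy.2)
      _ = y := hyc
  · intro W' hW' hmem
    obtain ⟨O, hO, hne, hsub, hEq⟩ := hloc ({y : X | y 0 = x 0} ∩ shf ⁻¹' W')
      (hWopen W' hW') ⟨rfl, hmem⟩
    refine ⟨cons (x 0) ⁻¹' O, (cont_cons (x 0)).isOpen_preimage _ hO, ?_, ?_, ?_⟩
    · obtain ⟨y, hy⟩ := hne
      refine ⟨shf y, ?_⟩
      show cons (x 0) (shf y) ∈ O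
      have h1 : y 0 = x 0 := (hsub hy).1
      rw [← h1, cons_shf]
      exact hy
    · intro z hz
      have h1 := (hsub hz).2
      rwa [Set.mem_preimage, shf_cons] at h1
    · intro z hz
      have h1 : ⇑g (cons (x 0) z) = cons (x 0) z := hEq hz
      have h2 : ⇑g (cons (x 0) z) = cons (x 0) (h z) := hs z
      show ⇑h z = z
      exact cons_tail (h2.symm.trans h1)

section NucElim

variable {r : ℕ} {A : ℕ → H} (hA : PinkPeriodicRec r fun i => ⇑(A i))

lemma inv_fix {g : H} {y : X} : ⇑(g⁻¹) y = y ↔ ⇑g y = y := by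
  constructor
  · intro h
    have h2 : ⇑g (⇑(g⁻¹) y) = y := g.apply_symm_apply y
    rwa [h] at h2
  · intro h
    have h2 : ⇑(g⁻¹) (⇑g y) = y := g.symm_apply_apply y
    rwa [h] at h2

include hA

lemma a1_nofix (y : X) : ⇑(A 1) y ≠ y := by
  intro hfix
  rcases fin2 (y 0) with h0 | h0
  · have hy : cons 0 (shf y) = y := by rw [← h0]; exact cons_shf y
    have h1 : ⇑(A 1) (cons 0 (shf y)) = cons 1 (shf y) := hA.1 (shf y)
    rw [hy, hfix, ← hy] at h1
    exact absurd (cons_head h1) (by decide)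
  · have hy : cons 1 (shf y) = y := by rw [← h0]; exact cons_shf y
    have h1 : ⇑(A 1) (cons 1 (shf y)) = cons 0 (⇑(A r) (shf y)) := hA.2.1 (shf y)
    rw [hy, hfix, ← hy] at h1
    exact absurd (cons_head h1) (by decide)

lemma fixlem : ∀ k i, k + 2 ≤ i → i ≤ r → ∀ y : X, y k = 1 → ⇑(A i) y = y := by
  intro k
  induction k with
  | zero =>
    intro i hi2 hir y hy
    have hy' : cons 1 (shf y) = y := by rw [← hy]; exact cons_shf y
    calc ⇑(A i) y = ⇑(A i) (cons 1 (shf y)) := by rw [hy']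
      _ = cons 1 (shf y) := (hA.2.2 i (by omega) hir).2 (shf y)
      _ = y := hy'
  | succ k IH =>
    intro i hi2 hir y hy
    rcases fin2 (y 0) with h0 | h0
    · have hy' : cons 0 (shf y) = y := by rw [← h0]; exact cons_shf y
      have htail : ⇑(A (i-1)) (shf y) = shf y :=
        IH (i-1) (by omega) (by omega) (shf y) hy
      calc ⇑(A i) y = ⇑(A i) (cons 0 (shf y)) := by rw [hy']
        _ = cons 0 (⇑(A (i-1)) (shf y)) := (hA.2.2 i (by omega) hir).1 (shf y)
        _ = cons 0 (shf y) := by rw [htail]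
        _ = y := hy'
    · have hy' : cons 1 (shf y) = y := by rw [← h0]; exact cons_shf y
      calc ⇑(A i) y = ⇑(A i) (cons 1 (shf y)) := by rw [hy']
        _ = cons 1 (shf y) := (hA.2.2 i (by omega) hir).2 (shf y)
        _ = y := hy'

lemma nofixA : ∀ i, 1 ≤ i → i ≤ r → ∀ y : X,
    (∀ k, k + 2 ≤ i → y k = 0) → ⇑(A i) y ≠ y := by
  intro i
  induction i using Nat.strong_induction_on with
  | _ i IH =>
  intro hi1 hir y hzero hfix
  rcases Nat.lt_or_ge i 2 with hi2 | hi2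
  · have h1 : i = 1 := by omega
    subst h1
    exact a1_nofix hA y hfix
  · have h0 : y 0 = 0 := hzero 0 (by omega)
    have hy' : cons 0 (shf y) = y := by rw [← h0]; exact cons_shf y
    have hstep : ⇑(A i) (cons 0 (shf y)) = cons 0 (⇑(A (i-1)) (shf y)) :=
      (hA.2.2 i hi2 hir).1 (shf y)
    have htail : ⇑(A (i-1)) (shf y) = shf y := by
      have h2 : cons 0 (⇑(A (i-1)) (shf y)) = cons 0 (shf y) := by
        rw [← hstep, hy', hfix, ← hy']
      exact cons_tail h2
    exact IH (i-1) (by omega) (by omega) (by omega) (shf y)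
      (fun k hk => hzero (k+1) (by omega)) htail

lemma disagree1 : ∀ j, 2 ≤ j → j ≤ r → ∀ y : X, ⇑(A 1) y ≠ ⇑(A j) y := by
  intro j hj2 hjr y hEq
  rcases fin2 (y 0) with h0 | h0
  · have hy : cons 0 (shf y) = y := by rw [← h0]; exact cons_shf y
    have h1 : ⇑(A 1) y = cons 1 (shf y) := by rw [← hy]; exact hA.1 (shf y)
    have h2 : ⇑(A j) y = cons 0 (⇑(A (j-1)) (shf y)) := by
      rw [← hy]; exact (hA.2.2 j hj2 hjr).1 (shf y)
    rw [h1, h2] at hEq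
    exact absurd (cons_head hEq) (by decide)
  · have hy : cons 1 (shf y) = y := by rw [← h0]; exact cons_shf y
    have h1 : ⇑(A 1) y = cons 0 (⇑(A r) (shf y)) := by rw [← hy]; exact hA.2.1 (shf y)
    have h2 : ⇑(A j) y = cons 1 (shf y) := by
      rw [← hy]; exact (hA.2.2 j hj2 hjr).2 (shf y)
    rw [h1, h2] at hEq
    exact absurd (cons_head hEq) (by decide)

lemma disagree : ∀ i, 1 ≤ i → i ≤ r → ∀ j, 1 ≤ j → j ≤ r → i ≠ j →
    ∀ y : X, (∀ k, k + 2 ≤ min i j → y k = 0) → ⇑(A i) y ≠ ⇑(A j) y := by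
  intro i
  induction i using Nat.strong_induction_on with
  | _ i IH =>
  intro hi1 hir j hj1 hjr hij y hzero hEq
  rcases Nat.lt_or_ge i 2 with hi2 | hi2
  · have h1 : i = 1 := by omega
    subst h1
    exact disagree1 hA j (by omega) hjr y hEq
  rcases Nat.lt_or_ge j 2 with hj2 | hj2
  · have h1 : j = 1 := by omega
    subst h1
    exact disagree1 hA i (by omega) hir y hEq.symm
  · have h0 : y 0 = 0 := hzero 0 (by omega)
    have hy : cons 0 (shf y) = y := by rw [← h0]; exact cons_shf y
    have h1 : ⇑(A i) y = cons 0 (⇑(A (i-1)) (shf y)) := by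
      rw [← hy]; exact (hA.2.2 i hi2 hir).1 (shf y)
    have h2 : ⇑(A j) y = cons 0 (⇑(A (j-1)) (shf y)) := by
      rw [← hy]; exact (hA.2.2 j hj2 hjr).1 (shf y)
    rw [h1, h2] at hEq
    exact IH (i-1) (by omega) (by omega) (by omega) (j-1) (by omega) (by omega)
      (by omega) (shf y) (fun k hk => hzero (k+1) (by omega)) (cons_tail hEq)

lemma nuc_elim {g : H} {z : X} (hn : Nuc r A g) (hh : NHat g z) : False := by
  obtain ⟨hfix, hnot, hloc⟩ := hh
  rcases hn with hg | ⟨i, hi1, hir, hg⟩ | ⟨i, j, hi1, hir, hj1, hjr, hij, hg⟩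
  · subst hg
    exact hnot Set.univ isOpen_univ (Set.mem_univ z) (fun y _ => rfl)
  · by_cases hex : ∃ k, k + 2 ≤ i ∧ z k = 1
    · obtain ⟨k, hk, hzk⟩ := hex
      refine hnot {y : X | y k = 1} (isOpen_digit k 1) hzk ?_
      intro y hy
      have hAy : ⇑(A i) y = y := fixlem hA k i hk hir y hy
      show ⇑g y = y
      rcases hg with hg | hg <;> subst hg
      · exact hAy
      · exact inv_fix.mpr hAy
    · push_neg at hex
      have hzero : ∀ k, k + 2 ≤ i → z k = 0 := by
        intro k hk
        rcases fin2 (z k) with h | h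
        · exact h
        · exact absurd h (hex k hk)
      obtain ⟨O, hO, ⟨y, hy⟩, hsub, hEq⟩ :=
        hloc {y : X | ∀ k, k + 2 ≤ i → y k = 0} (isOpen_zeros i) hzero
      have hfy : ⇑g y = y := hEq hy
      have hAy : ⇑(A i) y = y := by
        rcases hg with hg | hg <;> subst hg
        · exact hfy
        · exact inv_fix.mp hfy
      exact nofixA hA i hi1 hir y (hsub hy) hAy
  · subst hg
    by_cases hex : ∃ k, k + 2 ≤ min i j ∧ z k = 1
    · obtain ⟨k, hk, hzk⟩ := hex
      refine hnot {y : X | y k = 1} (isOpen_digit k 1) hzk ?_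
      intro y hy
      have hi' : ⇑(A i) y = y := fixlem hA k i (by omega) hir y hy
      have hj' : ⇑(A j) y = y := fixlem hA k j (by omega) hjr y hy
      show ⇑((A j)⁻¹) (⇑(A i) y) = y
      rw [hi']
      exact inv_fix.mpr hj'
    · push_neg at hex
      have hzero : ∀ k, k + 2 ≤ min i j → z k = 0 := by
        intro k hk
        rcases fin2 (z k) with h | h
        · exact h
        · exact absurd h (hex k hk)
      obtain ⟨O, hO, ⟨y, hy⟩, hsub, hEq⟩ :=
        hloc {y : X | ∀ k, k + 2 ≤ min i j → y k = 0} (isOpen_zeros (min i j)) hzero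
      have hfy : ⇑((A j)⁻¹) (⇑(A i) y) = y := hEq hy
      have hd : ⇑(A i) y = ⇑(A j) y := by
        calc ⇑(A i) y = ⇑(A j) (⇑((A j)⁻¹) (⇑(A i) y)) := ((A j).apply_symm_apply _).symm
          _ = ⇑(A j) y := by rw [hfy]
      exact disagree hA i hi1 hir j hj1 hjr hij y (hsub hy) hd

lemma ev_nhat_false {x : X} {g : H} (he : Ev r A x g) : NHat g x → False := by
  induction he with
  | nuc x g h =>
    intro hn
    exact nuc_elim hA h hn
  | step x g v' h hs hev IH =>
    intro hn
    exact IH (hn.step hs)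

end NucElim


end Pink8

/-- For `r ≥ 2`, the group `G̃_r = ⟨a₁, …, a_r⟩ ≤ Homeo({0,1}^ℕ)` generated by Pink's
recursively defined maps contains no non-Hausdorff elements for its action on `{0,1}^ℕ`. -/
theorem stmt8 (r : ℕ) (hr : 2 ≤ r)
    (A : ℕ → (ℕ → Fin 2) ≃ₜ (ℕ → Fin 2)) (hA : PinkPeriodicRec r (fun i => ⇑(A i))) :
    ∀ g ∈ (Subgroup.closure (A '' {i | 1 ≤ i ∧ i ≤ r}) :
        Subgroup ((ℕ → Fin 2) ≃ₜ (ℕ → Fin 2))),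
      ¬ IsNonHausdorffElement (⇑g) := by
  intro g hg hNH
  obtain ⟨x, h1, h2, h3⟩ := hNH
  have hg' : g ∈ Submonoid.closure ((A '' {i | 1 ≤ i ∧ i ≤ r}) ∪
      (A '' {i | 1 ≤ i ∧ i ≤ r})⁻¹) := by
    rw [← Subgroup.closure_toSubmonoid]
    exact hg
  obtain ⟨l, hl, hprod⟩ := Submonoid.exists_list_of_mem_closure hg'
  have hsmall : ∀ y ∈ l, Pink8.Small r A y := by
    intro y hy
    rcases hl y hy with h | h
    · obtain ⟨i, hi, hAi⟩ := h
      exact Or.inr ⟨i, hi.1, hi.2, Or.inl hAi.symm⟩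
    · rw [Set.mem_inv] at h
      obtain ⟨i, hi, hAi⟩ := h
      have hyy : y = (A i)⁻¹ := by rw [hAi, inv_inv]
      exact Or.inr ⟨i, hi.1, hi.2, Or.inr hyy⟩
  have hev := Pink8.ev_list hr hA l hsmall x
  rw [hprod] at hev
  exact Pink8.ev_nhat_false hA hev ⟨h1, h2, h3⟩
end

section
/- Let ℓ : ℕ → ℕ satisfy ℓ(n) ≥ 2 for all n ≥ 1, let X = ∏_{n ≥ 1} Fin(ℓ(n)), and for each n ≥ 1 let L_n be a nontrivial subgroup of the permutation group of Fin(ℓ(n)). Let H be a closed subgroup of the group of level-preserving homeomorphisms of X (with the topology of uniform convergence) such that for every n ≥ 1 the image H_n of H in the permutation group of V_n = Fin(ℓ(1)) × ⋯ × Fin(ℓ(n)) acts transitively on V_n and contains the iterated permutational wreath product ℒ_n = L_n ≀ ⋯ ≀ L_1. Then H contains a non-Hausdorff element. -/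
open UniformConvergence

/-- The standard metric on the path space `∏ n, Fin (ℓ n)` of a spherically homogeneous
rooted tree, inducing the product topology. -/
noncomputable instance pathSpaceMetric (ℓ : ℕ → ℕ) : MetricSpace (∀ n, Fin (ℓ n)) :=
  PiNat.metricSpace

/-- `g` is level-preserving: for every `n`, the first `n` coordinates of `g x` depend
only on the first `n` coordinates of `x`. -/
def LevelPreserving {ℓ : ℕ → ℕ} (g : (∀ n, Fin (ℓ n)) → (∀ n, Fin (ℓ n))) : Prop :=
  ∀ n : ℕ, ∀ x y : ∀ n, Fin (ℓ n), (∀ i < n, x i = y i) → ∀ i < n, g x i = g y i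

/-!
Fix letters `a k ≠ b k` and nontrivial `σ k ∈ L k` at every level, and let `g` act by `σ (m + 2)`
at level `m + 2` exactly below the vertex `a 0 ⋯ a (m - 1) b m b (m + 1)`, and trivially
elsewhere. Every truncation of `g` lies in the iterated wreath product, so `g ∈ H` because `H` is
closed. The path `a` is fixed by `g`, and each cylinder around `a` of length `n` contains both
the vertex `a 0 ⋯ a (n - 1) b n b (n + 1)`, below which `g` moves points, and the cylinder of
`a 0 ⋯ a (n - 1) b n a (n + 1)`, on which `g` is the identity.
-/

open PiNat

namespace PiNat

variable {E : ℕ → Type*}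

theorem exists_cylinder_subset_of_isOpen [∀ n, TopologicalSpace (E n)]
    [∀ n, DiscreteTopology (E n)] {W : Set (∀ n, E n)} (hW : IsOpen W) {x : ∀ n, E n}
    (hx : x ∈ W) : ∃ n, cylinder x n ⊆ W := by
  obtain ⟨_, ⟨y, n, rfl⟩, hxy, hsub⟩ :=
    (isTopologicalBasis_cylinders E).exists_subset_of_mem_open hx hW
  exact ⟨n, mem_cylinder_iff_eq.1 hxy ▸ hsub⟩

theorem cylinder_subset_cylinder {x y : ∀ n, E n} {m n : ℕ} (hy : y ∈ cylinder x n)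
    (hmn : n ≤ m) : cylinder y m ⊆ cylinder x n :=
  mem_cylinder_iff_eq.1 hy ▸ cylinder_anti y hmn

def splice (x y : ∀ n, E n) (m : ℕ) : ∀ n, E n := fun i => if i < m then x i else y i

theorem splice_mem_cylinder (x y : ∀ n, E n) (m : ℕ) : splice x y m ∈ cylinder x m :=
  fun _ hi => if_pos hi

theorem splice_apply_of_le (x y : ∀ n, E n) {m i : ℕ} (hi : m ≤ i) : splice x y m i = y i :=
  if_neg (not_lt.2 hi)

end PiNat

theorem isNonHausdorffElement_of_cylinders {E : ℕ → Type*} [∀ n, TopologicalSpace (E n)]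
    [∀ n, DiscreteTopology (E n)] {g : (∀ n, E n) → ∀ n, E n} {x : ∀ n, E n} (hx : g x = x)
    (hmoved : ∀ n, ∃ v ∈ cylinder x n, g v ≠ v)
    (hfixed : ∀ n, ∃ y m, cylinder y m ⊆ cylinder x n ∧ Set.EqOn g id (cylinder y m)) :
    IsNonHausdorffElement g := by
  refine ⟨x, hx, fun W hW hxW hgW => ?_, fun W hW hxW => ?_⟩
  · obtain ⟨n, hn⟩ := exists_cylinder_subset_of_isOpen hW hxW
    obtain ⟨v, hv, hgv⟩ := hmoved n
    exact hgv (hgW (hn hv))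
  · obtain ⟨n, hn⟩ := exists_cylinder_subset_of_isOpen hW hxW
    obtain ⟨y, m, hyx, hgy⟩ := hfixed n
    exact ⟨cylinder y m, isOpen_cylinder E y m, ⟨y, self_mem_cylinder y m⟩, hyx.trans hn, hgy⟩

theorem mem_of_isClosed_of_forall_mem_cylinder {α : Type*} {ℓ : ℕ → ℕ}
    {H : Set (α → ∀ n, Fin (ℓ n))} (hH : IsClosed (UniformFun.ofFun '' H))
    {g : α → ∀ n, Fin (ℓ n)} (hg : ∀ n, ∃ G ∈ H, ∀ v, G v ∈ cylinder (g v) n) : g ∈ H := by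
  choose G hGH hGg using hg
  have hlim : Filter.Tendsto (fun n => UniformFun.ofFun (G n)) Filter.atTop
      (nhds (UniformFun.ofFun g)) := by
    rw [UniformFun.tendsto_iff_tendstoUniformly, Metric.tendstoUniformly_iff]
    intro ε hε
    obtain ⟨N, hN⟩ := exists_pow_lt_of_lt_one hε (by norm_num : (1 / 2 : ℝ) < 1)
    filter_upwards [Filter.eventually_ge_atTop N] with n hn v
    calc dist (g v) (G n v) ≤ (1 / 2 : ℝ) ^ n :=
          mem_cylinder_iff_dist_le.1 ((mem_cylinder_comm _ _ _).1 (hGg n v))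
      _ ≤ (1 / 2 : ℝ) ^ N := pow_le_pow_of_le_one (by norm_num) (by norm_num) hn
      _ < ε := hN
  obtain ⟨g', hg'H, hg'g⟩ :=
    hH.mem_of_tendsto hlim (Filter.Eventually.of_forall fun n => ⟨G n, hGH n, rfl⟩)
  exact UniformFun.ofFun.injective hg'g ▸ hg'H

section Portrait

open Equiv

variable {E : ℕ → Type*}

def ofPortrait (τ : ∀ k, (∀ i, E i) → Perm (E k)) (v : ∀ i, E i) : ∀ k, E k :=
  fun k => τ k v (v k)

theorem ofPortrait_eq_self {τ : ∀ k, (∀ i, E i) → Perm (E k)} {v : ∀ i, E i}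
    (hv : ∀ k, τ k v = 1) : ofPortrait τ v = v :=
  funext fun k => by rw [ofPortrait, hv]; rfl

/- `cylinder (splice a b m) (m + 2)` is the set of paths through the vertex
`a 0 ⋯ a (m - 1) b m b (m + 1)`. -/
open Classical in
noncomputable def nonHausdorffPortrait (a b : ∀ i, E i) (σ : ∀ k, Perm (E k)) :
    ∀ k, (∀ i, E i) → Perm (E k)
  | 0, _ => 1
  | 1, _ => 1
  | m + 2, v => if v ∈ cylinder (splice a b m) (m + 2) then σ (m + 2) else 1

variable {a b : ∀ i, E i} {σ : ∀ k, Perm (E k)}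

theorem nonHausdorffPortrait_mem {L : ∀ k, Subgroup (Perm (E k))} (hσ : ∀ k, σ k ∈ L k)
    (k : ℕ) (v : ∀ i, E i) : nonHausdorffPortrait a b σ k v ∈ L k := by
  match k with
  | 0 | 1 => exact one_mem _
  | m + 2 =>
    rw [nonHausdorffPortrait]
    split_ifs
    exacts [hσ _, one_mem _]

theorem nonHausdorffPortrait_congr {k : ℕ} {v w : ∀ i, E i} (h : v ∈ cylinder w k) :
    nonHausdorffPortrait a b σ k v = nonHausdorffPortrait a b σ k w := by
  match k with
  | 0 | 1 => rfl
  | m + 2 => simp only [nonHausdorffPortrait, mem_cylinder_iff_eq, mem_cylinder_iff_eq.1 h]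

theorem nonHausdorffPortrait_of_mem_cylinder {m : ℕ} {v : ∀ i, E i}
    (hv : v ∈ cylinder (splice a b m) (m + 2)) :
    nonHausdorffPortrait a b σ (m + 2) v = σ (m + 2) :=
  if_pos hv

theorem nonHausdorffPortrait_eq_one {v : ∀ i, E i}
    (hv : ∀ m, v ∉ cylinder (splice a b m) (m + 2)) (k : ℕ) :
    nonHausdorffPortrait a b σ k v = 1 := by
  match k with
  | 0 | 1 => rfl
  | m + 2 => exact if_neg (hv m)

theorem notMem_cylinder_splice_self (hab : ∀ i, a i ≠ b i) (m : ℕ) :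
    a ∉ cylinder (splice a b m) (m + 2) := fun h =>
  hab m ((h m (by omega)).trans (splice_apply_of_le a b le_rfl))

theorem notMem_cylinder_splice_of_mem_cylinder_update (hab : ∀ i, a i ≠ b i) {n : ℕ}
    {v : ∀ i, E i} (hv : v ∈ cylinder (Function.update a n (b n)) (n + 2)) (m : ℕ) :
    v ∉ cylinder (splice a b m) (m + 2) := by
  intro h
  have hvh : ∀ i < min (n + 2) (m + 2), Function.update a n (b n) i = splice a b m i :=
    fun i hi => (hv i (by omega)).symm.trans (h i (by omega))
  rcases lt_trichotomy m n with hmn | rfl | hmn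
  · have := hvh m (by omega)
    rw [Function.update_of_ne hmn.ne, splice_apply_of_le a b le_rfl] at this
    exact hab m this
  · have := hvh (m + 1) (by omega)
    rw [Function.update_of_ne (by omega), splice_apply_of_le a b (by omega)] at this
    exact hab (m + 1) this
  · have := hvh n (by omega)
    rw [Function.update_self, splice, if_pos hmn] at this
    exact hab n this.symm

theorem isNonHausdorffElement_ofPortrait [∀ n, TopologicalSpace (E n)]
    [∀ n, DiscreteTopology (E n)] (hab : ∀ i, a i ≠ b i) (hσ : ∀ k, σ k ≠ 1) :
    IsNonHausdorffElement (ofPortrait (nonHausdorffPortrait a b σ)) := by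
  choose p hp using fun k => not_forall.1 (mt Perm.ext (hσ k))
  refine isNonHausdorffElement_of_cylinders
    (ofPortrait_eq_self (nonHausdorffPortrait_eq_one (notMem_cylinder_splice_self hab)))
    (fun n => ?_) (fun n => ?_)
  · have hv : splice (splice a b n) p (n + 2) ∈ cylinder (splice a b n) (n + 2) :=
      splice_mem_cylinder _ p _
    refine ⟨_, cylinder_subset_cylinder (splice_mem_cylinder a b n) (by omega) hv,
      fun hfix => hp (n + 2) ?_⟩
    have := congrFun hfix (n + 2)
    rwa [ofPortrait, nonHausdorffPortrait_of_mem_cylinder hv,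
      splice_apply_of_le _ p le_rfl] at this
  · exact ⟨_, n + 2, cylinder_subset_cylinder (update_mem_cylinder a n (b n)) (by omega),
      fun v hv => ofPortrait_eq_self (nonHausdorffPortrait_eq_one
        (notMem_cylinder_splice_of_mem_cylinder_update hab hv))⟩

end Portrait

theorem stmt13_general (ℓ : ℕ → ℕ) (hl : ∀ n, 2 ≤ ℓ n)
    (L : ∀ k, Subgroup (Equiv.Perm (Fin (ℓ k)))) (hL : ∀ k, L k ≠ ⊥)
    (H : Set ((∀ n, Fin (ℓ n)) → (∀ n, Fin (ℓ n))))
    (hclosed : IsClosed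
      ((fun g : (∀ n, Fin (ℓ n)) → (∀ n, Fin (ℓ n)) => UniformFun.ofFun g) '' H :
        Set ((∀ n, Fin (ℓ n)) →ᵤ (∀ n, Fin (ℓ n)))))
    (hwreath : ∀ n : ℕ,
      ∀ τ : (k : ℕ) → ((∀ i, Fin (ℓ i)) → Equiv.Perm (Fin (ℓ k))),
      (∀ k w, τ k w ∈ L k) →
      (∀ k, ∀ w w' : ∀ i, Fin (ℓ i), (∀ i < k, w i = w' i) → τ k w = τ k w') →
      ∃ g ∈ H, ∀ v : ∀ i, Fin (ℓ i), ∀ k < n, g v k = τ k v (v k)) :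
    ∃ g ∈ H, IsNonHausdorffElement g := by
  have (k : ℕ) : Nontrivial (Fin (ℓ k)) := Fin.nontrivial_iff_two_le.2 (hl k)
  choose a b hab using fun k => exists_pair_ne (Fin (ℓ k))
  choose σ hσL hσ using fun k => (L k).bot_or_exists_ne_one.resolve_left (hL k)
  refine ⟨ofPortrait (nonHausdorffPortrait a b σ),
    mem_of_isClosed_of_forall_mem_cylinder hclosed fun n => ?_,
    isNonHausdorffElement_ofPortrait hab hσ⟩
  exact hwreath n _ (nonHausdorffPortrait_mem hσL) fun _ _ _ => nonHausdorffPortrait_congr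

/-- Let `H` be a closed subgroup of the group of level-preserving homeomorphisms of the
path space `X = ∏ n, Fin (ℓ n)` (closed for the topology of uniform convergence) whose
image at each level `n` acts transitively on the level-`n` vertices and contains the
iterated permutational wreath product of nontrivial permutation groups `L_n ≀ ⋯ ≀ L_1`.
Then `H` contains a non-Hausdorff element. -/
theorem stmt13 (ℓ : ℕ → ℕ) (hl : ∀ n, 2 ≤ ℓ n)
    (L : ∀ k, Subgroup (Equiv.Perm (Fin (ℓ k)))) (hL : ∀ k, L k ≠ ⊥)
    (H : Set ((∀ n, Fin (ℓ n)) → (∀ n, Fin (ℓ n))))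
    (haut : ∀ g ∈ H, IsHomeomorph g ∧ LevelPreserving g)
    (hone : id ∈ H)
    (hmul : ∀ g ∈ H, ∀ h ∈ H, g ∘ h ∈ H)
    (hinv : ∀ g ∈ H, ∃ h ∈ H, g ∘ h = id ∧ h ∘ g = id)
    (hclosed : IsClosed
      ((fun g : (∀ n, Fin (ℓ n)) → (∀ n, Fin (ℓ n)) => UniformFun.ofFun g) '' H :
        Set ((∀ n, Fin (ℓ n)) →ᵤ (∀ n, Fin (ℓ n)))))
    (htrans : ∀ n : ℕ, ∀ v w : ∀ n, Fin (ℓ n), ∃ g ∈ H, ∀ k < n, g v k = w k)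
    (hwreath : ∀ n : ℕ,
      ∀ τ : (k : ℕ) → ((∀ i, Fin (ℓ i)) → Equiv.Perm (Fin (ℓ k))),
      (∀ k w, τ k w ∈ L k) →
      (∀ k, ∀ w w' : ∀ i, Fin (ℓ i), (∀ i < k, w i = w' i) → τ k w = τ k w') →
      ∃ g ∈ H, ∀ v : ∀ i, Fin (ℓ i), ∀ k < n, g v k = τ k v (v k)) :
    ∃ g ∈ H, IsNonHausdorffElement g :=
  stmt13_general ℓ hl L hL H hclosed hwreath
end

section
/- Let ℓ : ℕ → ℕ satisfy ℓ(n) ≥ 2 for all n ≥ 1, let X = ∏_{n ≥ 1} Fin(ℓ(n)), and for each k ≥ 1 let q_k be a nontrivial permutation of Fin(ℓ(2k+1)). Define g : X → X by: if there exists k ≥ 1 with x_i = 0 for all 1 ≤ i ≤ 2k−1 and x_{2k} = 1, then g(x) agrees with x in all coordinates except coordinate 2k+1, where g(x)_{2k+1} = q_k(x_{2k+1}); otherwise g(x) = x (at most one such k exists for any x). Then g is a level-preserving homeomorphism of X; g fixes the all-zero sequence 0^∞; for every k ≥ 1 the map g restricts to the identity on the cylinder {x : x_i = 0 for all i ≤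 2k and x_{2k+1} = 1} but does not restrict to the identity on the cylinder {x : x_i = 0 for all i ≤ 2k}. Consequently g is a non-Hausdorff element of the group of level-preserving homeomorphisms of X. -/
/-- The map `g` of the path space `∏ n, Fin (ℓ n)` (coordinates indexed from `0`):
if the initial coordinates of `x` form a word `0…01` of (even) length `n ≥ 2`, then `g`
permutes coordinate `n` of `x` by `q n`, and `g` changes nothing otherwise.  (With
coordinates indexed from `1` as in the paper: if `x_i = 0` for all `i ≤ 2k-1` and
`x_{2k} = 1`, then coordinate `2k+1` is permuted by `q_k`.) -/
def gmap (ℓ : ℕ → ℕ) (q : ∀ n, Equiv.Perm (Fin (ℓ n)))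
    (x : ∀ n, Fin (ℓ n)) : ∀ n, Fin (ℓ n) :=
  fun n =>
    if 1 ≤ n ∧ n % 2 = 0 ∧ (∀ j < n - 1, (x j : ℕ) = 0) ∧ (x (n - 1) : ℕ) = 1 then
      q n (x n)
    else x n

/-!
Coordinate `n` of `g x` is computed from coordinates `≤ n` of `x`, so `g` is level-preserving,
hence continuous, and the map of the same shape built from the inverse permutations inverts
it. A sequence has at most one active position (one preceded by a word `0…01` of even
length), and `g` changes only that coordinate; as the trigger `1` sits at an odd position and
the permuted coordinate at an even one, `x` and `g x` have the same active position.

Every neighbourhood of `0^∞` contains a cylinder `0^{2k}` (0-indexed), which contains a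
sequence `0^{2k}1b…` moved by `q (2k+2)`, but also the open cylinder `0^{2k}1`, whose first
`1` sits at an even position, so that no coordinate of its points is active.
-/

open PiNat Filter Topology Function

section Cylinder

variable {E : ℕ → Type*} [∀ n, TopologicalSpace (E n)] [∀ n, DiscreteTopology (E n)]

theorem isOpen_of_forall_cylinder_subset {s : Set (∀ n, E n)} (n : ℕ)
    (hs : ∀ x ∈ s, cylinder x n ⊆ s) : IsOpen s :=
  isOpen_iff_mem_nhds.2 fun x hx =>
    mem_of_superset ((isOpen_cylinder E x n).mem_nhds (self_mem_cylinder x n)) (hs x hx)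

theorem exists_cylinder_subset_of_mem_nhds {s : Set (∀ n, E n)} {x : ∀ n, E n}
    (hs : s ∈ 𝓝 x) : ∃ n, cylinder x n ⊆ s := by
  obtain ⟨_, ⟨y, n, rfl⟩, hx, hsub⟩ := (isTopologicalBasis_cylinders E).mem_nhds_iff.1 hs
  exact ⟨n, mem_cylinder_iff_eq.1 hx ▸ hsub⟩

theorem isNonHausdorffElement_of_cylinder {g : (∀ n, E n) → ∀ n, E n} {x : ∀ n, E n}
    (hx : g x = x) (hne : ∀ n, ¬ Set.EqOn g id (cylinder x n))
    (hfix : ∀ n, ∃ O, IsOpen O ∧ O.Nonempty ∧ O ⊆ cylinder x n ∧ Set.EqOn g id O) :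
    IsNonHausdorffElement g := by
  refine ⟨x, hx, fun W hW hxW hgW => ?_, fun W hW hxW => ?_⟩
  · obtain ⟨n, hn⟩ := exists_cylinder_subset_of_mem_nhds (hW.mem_nhds hxW)
    exact hne n (hgW.mono hn)
  · obtain ⟨n, hn⟩ := exists_cylinder_subset_of_mem_nhds (hW.mem_nhds hxW)
    obtain ⟨O, hO, hO_ne, hO_sub, hgO⟩ := hfix n
    exact ⟨O, hO, hO_ne, hO_sub.trans hn, hgO⟩

end Cylinder

theorem LevelPreserving.continuous {ℓ : ℕ → ℕ} {g : (∀ n, Fin (ℓ n)) → ∀ n, Fin (ℓ n)}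
    (hg : LevelPreserving g) : Continuous g := by
  refine continuous_pi fun i => IsLocallyConstant.continuous ?_
  rw [IsLocallyConstant.iff_eventually_eq]
  intro x
  filter_upwards [(isOpen_cylinder _ x (i + 1)).mem_nhds (self_mem_cylinder x (i + 1))]
    with y hy
  exact hg (i + 1) y x hy i i.lt_succ_self

section gmap

variable {ℓ : ℕ → ℕ} {q : ∀ n, Equiv.Perm (Fin (ℓ n))} {x y : ∀ n, Fin (ℓ n)} {n m k : ℕ}

variable (ℓ) in
def ActiveAt (n : ℕ) (x : ∀ n, Fin (ℓ n)) : Prop :=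
  1 ≤ n ∧ n % 2 = 0 ∧ (∀ j < n - 1, (x j : ℕ) = 0) ∧ (x (n - 1) : ℕ) = 1

theorem gmap_of_activeAt (h : ActiveAt ℓ n x) : gmap ℓ q x n = q n (x n) :=
  if_pos h

theorem gmap_of_not_activeAt (h : ¬ ActiveAt ℓ n x) : gmap ℓ q x n = x n :=
  if_neg h

theorem ActiveAt.congr (hy : y ∈ cylinder x n) : ActiveAt ℓ n x ↔ ActiveAt ℓ n y := by
  have h : ∀ j < n, (y j : ℕ) = x j := fun j hj => congrArg Fin.val (hy j hj)
  refine and_congr_right fun _ => and_congr_right fun _ =>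
    and_congr (forall₂_congr fun j hj => ?_) ?_
  · rw [h j (by omega)]
  · rw [h (n - 1) (by omega)]

theorem ActiveAt.unique (hn : ActiveAt ℓ n x) (hm : ActiveAt ℓ m x) : n = m := by
  obtain ⟨hn1, hn2, hn3, hn4⟩ := hn
  obtain ⟨hm1, hm2, hm3, hm4⟩ := hm
  by_contra hne
  rcases Nat.lt_or_gt_of_ne hne with h | h
  · have := hm3 (n - 1) (by omega); omega
  · have := hn3 (m - 1) (by omega); omega

theorem gmap_mem_cylinder (h : ActiveAt ℓ n x) : gmap ℓ q x ∈ cylinder x n :=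
  fun _ hj => gmap_of_not_activeAt fun hj' => hj.ne (hj'.unique h)

theorem activeAt_gmap_iff : ActiveAt ℓ n (gmap ℓ q x) ↔ ActiveAt ℓ n x := by
  by_cases hx : ∃ m, ActiveAt ℓ m x
  · obtain ⟨m, hm⟩ := hx
    rcases le_or_gt n m with h | h
    · exact (ActiveAt.congr (cylinder_anti _ h (gmap_mem_cylinder hm))).symm
    · refine iff_of_false (fun hg => ?_) (fun hn => h.ne' (hn.unique hm))
      -- the trigger `1` of `x` at position `m - 1` survives in `g x`
      have h1 : (gmap ℓ q x (m - 1) : ℕ) = 1 := by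
        rw [gmap_mem_cylinder hm (m - 1) (by have := hm.1; omega)]
        exact hm.2.2.2
      have := hg.2.2.1 (m - 1) (by have := hm.1; have := hm.2.1; have := hg.2.1; omega)
      omega
  · push Not at hx
    rw [show gmap ℓ q x = x from funext fun j => gmap_of_not_activeAt (hx j)]

theorem gmap_gmap (q' : ∀ n, Equiv.Perm (Fin (ℓ n))) :
    gmap ℓ q' (gmap ℓ q x) = gmap ℓ (q' * q) x := by
  funext n
  by_cases h : ActiveAt ℓ n x
  · rw [gmap_of_activeAt (activeAt_gmap_iff.2 h), gmap_of_activeAt h, gmap_of_activeAt h]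
    rfl
  · rw [gmap_of_not_activeAt (mt activeAt_gmap_iff.1 h), gmap_of_not_activeAt h,
      gmap_of_not_activeAt h]

theorem gmap_one : gmap ℓ 1 x = x :=
  funext fun _ => ite_self _

theorem levelPreserving_gmap : LevelPreserving (gmap ℓ q) := by
  intro n x y h i hi
  have hy : y ∈ cylinder x i := fun j hj => (h j (hj.trans hi)).symm
  by_cases hx : ActiveAt ℓ i x
  · rw [gmap_of_activeAt hx, gmap_of_activeAt ((ActiveAt.congr hy).1 hx), h i hi]
  · rw [gmap_of_not_activeAt hx, gmap_of_not_activeAt (mt (ActiveAt.congr hy).2 hx), h i hi]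

theorem isHomeomorph_gmap : IsHomeomorph (gmap ℓ q) :=
  isHomeomorph_iff_exists_inverse.2
    ⟨levelPreserving_gmap.continuous, gmap ℓ q⁻¹,
      fun x => by rw [gmap_gmap, inv_mul_cancel, gmap_one],
      fun x => by rw [gmap_gmap, mul_inv_cancel, gmap_one],
      levelPreserving_gmap.continuous⟩

theorem gmap_eq_self_of_forall_ne_one (h : ∀ n, (x n : ℕ) ≠ 1) : gmap ℓ q x = x :=
  funext fun _ => gmap_of_not_activeAt fun hn => h _ hn.2.2.2

theorem gmap_eq_self_of_zero_one (h0 : ∀ j < 2 * k, (x j : ℕ) = 0) (h1 : (x (2 * k) : ℕ) = 1) :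
    gmap ℓ q x = x := by
  funext n
  refine gmap_of_not_activeAt fun ⟨hn1, hn2, hn3, hn4⟩ => ?_
  rcases Nat.lt_trichotomy (n - 1) (2 * k) with h | h | h
  · have := h0 (n - 1) h; omega
  · omega
  · have := hn3 (2 * k) h; omega

theorem eqOn_gmap_zero_one (k : ℕ) :
    Set.EqOn (gmap ℓ q) id
      {x : ∀ n, Fin (ℓ n) | (∀ j < 2 * k, (x j : ℕ) = 0) ∧ (x (2 * k) : ℕ) = 1} :=
  fun _ hx => gmap_eq_self_of_zero_one hx.1 hx.2

theorem isOpen_zero_one (k : ℕ) :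
    IsOpen {x : ∀ n, Fin (ℓ n) | (∀ j < 2 * k, (x j : ℕ) = 0) ∧ (x (2 * k) : ℕ) = 1} :=
  isOpen_of_forall_cylinder_subset (2 * k + 1) fun x hx y hy =>
    ⟨fun j hj => by rw [hy j (by omega)]; exact hx.1 j hj,
      by rw [hy (2 * k) (by omega)]; exact hx.2⟩

variable (ℓ) in
def zeroSeq (hl : ∀ n, 2 ≤ ℓ n) : ∀ n, Fin (ℓ n) :=
  fun n => ⟨0, Nat.lt_of_lt_of_le Nat.zero_lt_two (hl n)⟩

theorem mem_cylinder_zeroSeq_iff (hl : ∀ n, 2 ≤ ℓ n) :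
    x ∈ cylinder (zeroSeq ℓ hl) n ↔ ∀ j < n, (x j : ℕ) = 0 :=
  forall₂_congr fun _ _ => Fin.ext_iff

theorem not_eqOn_gmap_zero (hl : ∀ n, 2 ≤ ℓ n) (hq : q (2 * (k + 1)) ≠ 1) :
    ¬ Set.EqOn (gmap ℓ q) id {x : ∀ n, Fin (ℓ n) | ∀ j < 2 * k, (x j : ℕ) = 0} := by
  obtain ⟨b, hb⟩ : ∃ b, q (2 * (k + 1)) b ≠ b := by
    by_contra! h
    exact hq (Equiv.ext h)
  let y := update (update (zeroSeq ℓ hl) (2 * k + 1) ⟨1, hl _⟩) (2 * (k + 1)) b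
  have hy : ∀ j ≤ 2 * k, (y j : ℕ) = 0 := fun j hj => by
    simp only [y, update_of_ne (show j ≠ 2 * (k + 1) by omega),
      update_of_ne (show j ≠ 2 * k + 1 by omega), zeroSeq]
  have hy_active : ActiveAt ℓ (2 * (k + 1)) y :=
    ⟨by omega, by omega, fun j hj => hy j (by omega), by
      rw [show 2 * (k + 1) - 1 = 2 * k + 1 by omega]
      simp [y, update_of_ne (show 2 * k + 1 ≠ 2 * (k + 1) by omega)]⟩
  intro h
  have := congrFun (h fun j hj => hy j hj.le) (2 * (k + 1))
  rw [gmap_of_activeAt hy_active] at this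
  exact hb (by simpa [y] using this)

theorem isNonHausdorffElement_gmap (hl : ∀ n, 2 ≤ ℓ n)
    (hq : ∀ k, 1 ≤ k → q (2 * k) ≠ 1) : IsNonHausdorffElement (gmap ℓ q) := by
  refine isNonHausdorffElement_of_cylinder (x := zeroSeq ℓ hl)
    (gmap_eq_self_of_forall_ne_one fun _ => zero_ne_one) (fun n h => ?_) (fun n => ?_)
  · refine not_eqOn_gmap_zero hl (hq (n + 1) (by omega)) (h.mono fun x hx => ?_)
    exact (mem_cylinder_zeroSeq_iff hl).2 fun j hj => hx j (by omega)
  · refine ⟨_, isOpen_zero_one n, ⟨update (zeroSeq ℓ hl) (2 * n) ⟨1, hl _⟩, ?_, ?_⟩,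
      fun x hx => (mem_cylinder_zeroSeq_iff hl).2 fun j hj => hx.1 j (by omega),
      eqOn_gmap_zero_one n⟩
    · intro j hj
      simp [update_of_ne hj.ne, zeroSeq]
    · simp

end gmap

/-- The explicitly defined map `g` is a level-preserving homeomorphism of the path space
`X = ∏ n, Fin (ℓ n)`, it fixes the all-zero sequence, it is the identity on each cylinder
`{x : x_i = 0 for i ≤ 2k, x_{2k+1} = 1}` but not on the cylinder
`{x : x_i = 0 for i ≤ 2k}` (1-indexed); consequently it is a non-Hausdorff element of the
group of level-preserving homeomorphisms of `X`. -/
theorem stmt14 (ℓ : ℕ → ℕ) (hl : ∀ n, 2 ≤ ℓ n)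
    (q : ∀ n, Equiv.Perm (Fin (ℓ n))) (hq : ∀ k, 1 ≤ k → q (2 * k) ≠ 1) :
    (IsHomeomorph (gmap ℓ q) ∧ LevelPreserving (gmap ℓ q)) ∧
    gmap ℓ q (fun n => (⟨0, Nat.lt_of_lt_of_le Nat.zero_lt_two (hl n)⟩ : Fin (ℓ n))) =
      (fun n => (⟨0, Nat.lt_of_lt_of_le Nat.zero_lt_two (hl n)⟩ : Fin (ℓ n))) ∧
    (∀ k : ℕ, 1 ≤ k →
      Set.EqOn (gmap ℓ q) id
        {x : ∀ n, Fin (ℓ n) | (∀ j < 2 * k, (x j : ℕ) = 0) ∧ (x (2 * k) : ℕ) = 1}) ∧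
    (∀ k : ℕ, 1 ≤ k →
      ¬ Set.EqOn (gmap ℓ q) id {x : ∀ n, Fin (ℓ n) | ∀ j < 2 * k, (x j : ℕ) = 0}) ∧
    IsNonHausdorffElement (gmap ℓ q) := by
  refine ⟨⟨isHomeomorph_gmap, levelPreserving_gmap⟩,
    gmap_eq_self_of_forall_ne_one fun _ => zero_ne_one, fun k _ => eqOn_gmap_zero_one k,
    fun k _ => not_eqOn_gmap_zero hl (hq (k + 1) (by omega)), isNonHausdorffElement_gmap hl hq⟩
end
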